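/- arXiv:1812.01557 — 10 statements merged into one kernel-verified Lean document; each statement's English description precedes it below -/
import Mathlib

section
/- Let d be a positive integer and let 0 ≤ β < α < 1. Let H be a probability distribution over the (finite) set of Boolean functions h : {-1,1}^d → {-1,1}, and for θ ∈ [0,1] let p_θ = Pr_{h∼H, (x,y) θ-correlated}[h(x) = h(y)]. Assume p_β < 1. Then log(1/p_α)/log(1/p_β) ≥ log(2/(1+α))/log(2/(1+β)). -/
open Finset

noncomputable section

/-- Embedding of `Bool` into `{-1, 1} ⊆ ℝ`: `true ↦ 1`, `false ↦ -1`. -/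
def signVal (b : Bool) : ℝ := if b then 1 else -1

/-- The joint probability mass function of a randomly `θ`-correlated pair `(x, y)`:
`x` is uniform on the hypercube and each `y i` independently equals `x i` with
probability `(1 + θ)/2` and `-x i` (i.e. `!(x i)`) with probability `(1 - θ)/2`. -/
def corrPMF (d : ℕ) (θ : ℝ) (x y : Fin d → Bool) : ℝ :=
  (1 / 2 ^ d) * ∏ i, (if x i = y i then (1 + θ) / 2 else (1 - θ) / 2)

/-- The collision probability `Pr[h(x) = h(y)]` for a randomly `θ`-correlated pair. -/
def collProb (d : ℕ) (θ : ℝ) (h : (Fin d → Bool) → Bool) : ℝ :=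
  ∑ x, ∑ y, corrPMF d θ x y * (if h x = h y then 1 else 0)

/-- The collision probability `p_θ = Pr_{h ∼ H, (x,y) θ-corr}[h(x) = h(y)]` where `H` is a
probability mass function on Boolean functions. -/
def collProbH (d : ℕ) (θ : ℝ) (H : ((Fin d → Bool) → Bool) → ℝ) : ℝ :=
  ∑ h, H h * collProb d θ h

/-- The expectation `E[f(x) g(y)]` for a randomly `θ`-correlated pair `(x, y)`. -/
def corrExp (d : ℕ) (θ : ℝ) (f g : (Fin d → Bool) → ℝ) : ℝ :=
  ∑ x, ∑ y, corrPMF d θ x y * (f x * g y)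

/-- The Fourier coefficient `f̂(S) = E_x[f(x) ∏_{i ∈ S} x i]`. -/
def cubeFourierCoeff (d : ℕ) (f : (Fin d → Bool) → ℝ) (S : Finset (Fin d)) : ℝ :=
  (1 / 2 ^ d) * ∑ x, f x * ∏ i ∈ S, signVal (x i)

/-- The Fourier weight of `f` at degree `k`: `W^k[f] = ∑_{|S| = k} f̂(S)^2`. -/
def cubeFourierWeight (d : ℕ) (f : (Fin d → Bool) → ℝ) (k : ℕ) : ℝ :=
  ∑ S ∈ Finset.univ.filter (fun S : Finset (Fin d) => S.card = k), (cubeFourierCoeff d f S) ^ 2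

/-!
In the Walsh basis, `p_θ = ∑_S w_S (1 + θ^|S|)/2`, where by Parseval the spectral weights `w_S`
of `H` form a probability distribution on subsets `S`. In the variable `u = log (2/(1+θ))`, the
exponent `-log ((1 + θ^k)/2)` is a concave function of `u` vanishing at `0`; comparing its values
at `u(α) ≤ u(β)` gives `(1 + α^k)/2 ≤ ((1 + β^k)/2)^c` with `c = u(α)/u(β) ∈ [0, 1]`. Averaging
over `w` and applying Jensen's inequality to the concave map `t ↦ t^c` yields `p_α ≤ p_β^c`;
taking logarithms (`log p_β < 0`) gives the bound.
-/

open Real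

def walsh {ι : Type*} (S : Finset ι) (x : ι → Bool) : ℝ := ∏ i ∈ S, signVal (x i)

lemma signVal_mul_self (b : Bool) : signVal b * signVal b = 1 := by
  cases b <;> norm_num [signVal]

lemma cubeFourierCoeff_eq_sum_walsh (d : ℕ) (f : (Fin d → Bool) → ℝ) (S : Finset (Fin d)) :
    cubeFourierCoeff d f S = 1 / 2 ^ d * ∑ x, f x * walsh S x := rfl

lemma sum_sum_corrPMF (d : ℕ) (θ : ℝ) : ∑ x, ∑ y, corrPMF d θ x y = 1 := by
  have hx (x : Fin d → Bool) :
      ∑ y : Fin d → Bool, ∏ i, (if x i = y i then (1 + θ) / 2 else (1 - θ) / 2) = 1 := by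
    rw [← Fintype.prod_sum fun i b => if x i = b then (1 + θ) / 2 else (1 - θ) / 2]
    refine Finset.prod_eq_one fun i _ => ?_
    cases x i <;> simp only [Fintype.sum_bool] <;> norm_num <;> ring
  simp [corrPMF, ← Finset.mul_sum, hx, Finset.card_univ]

lemma corrPMF_one (d : ℕ) (x y : Fin d → Bool) :
    corrPMF d 1 x y = if x = y then 1 / 2 ^ d else 0 := by
  split_ifs with hxy
  · simp [corrPMF, hxy]
  · obtain ⟨i, hi⟩ := Function.ne_iff.1 hxy
    simp only [corrPMF, mul_eq_zero]
    exact Or.inr (Finset.prod_eq_zero (Finset.mem_univ i) (by simp [hi]))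

lemma corrPMF_eq_sum_walsh (d : ℕ) (θ : ℝ) (x y : Fin d → Bool) :
    corrPMF d θ x y = (1 / 2 ^ d) ^ 2 * ∑ S, θ ^ #S * (walsh S x * walsh S y) := by
  have hcoord (i : Fin d) : (if x i = y i then (1 + θ) / 2 else (1 - θ) / 2)
      = (1 + θ * (signVal (x i) * signVal (y i))) / 2 := by
    cases x i <;> cases y i <;> norm_num [signVal] <;> ring
  simp only [corrPMF, hcoord, Finset.prod_div_distrib, Finset.prod_one_add, Finset.powerset_univ,
    Finset.prod_mul_distrib, Finset.prod_const, Finset.card_univ, Fintype.card_fin, walsh]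
  ring

lemma corrExp_self_eq_sum_sq (d : ℕ) (θ : ℝ) (f : (Fin d → Bool) → ℝ) :
    corrExp d θ f f = ∑ S, θ ^ #S * cubeFourierCoeff d f S ^ 2 := by
  simp only [corrExp, corrPMF_eq_sum_walsh, cubeFourierCoeff_eq_sum_walsh, sq, Finset.mul_sum,
    Finset.sum_mul]
  conv_lhs => enter [2, x]; rw [Finset.sum_comm]
  rw [Finset.sum_comm]
  refine Finset.sum_congr rfl fun S _ => Finset.sum_congr rfl fun x _ =>
    Finset.sum_congr rfl fun y _ => ?_
  ring

lemma sum_sq_cubeFourierCoeff {d : ℕ} {f : (Fin d → Bool) → ℝ} (hf : ∀ x, f x * f x = 1) :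
    ∑ S, cubeFourierCoeff d f S ^ 2 = 1 := by
  have h := corrExp_self_eq_sum_sq d 1 f
  simp only [one_pow, one_mul] at h
  rw [← h]
  simp [corrExp, corrPMF_one, hf, Finset.card_univ]

lemma collProb_eq_sum (d : ℕ) (θ : ℝ) (h : (Fin d → Bool) → Bool) :
    collProb d θ h =
      ∑ S, cubeFourierCoeff d (fun x => signVal (h x)) S ^ 2 * ((1 + θ ^ #S) / 2) := by
  have hind (a b : Bool) : (if a = b then (1 : ℝ) else 0) = (1 + signVal a * signVal b) / 2 := by
    cases a <;> cases b <;> norm_num [signVal]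
  have hsplit : collProb d θ h = (∑ x, ∑ y, corrPMF d θ x y) / 2
      + corrExp d θ (fun x => signVal (h x)) (fun x => signVal (h x)) / 2 := by
    simp only [collProb, corrExp, hind, Finset.sum_div, ← Finset.sum_add_distrib]
    exact Finset.sum_congr rfl fun x _ => Finset.sum_congr rfl fun y _ => by ring
  have hparseval := sum_sq_cubeFourierCoeff (fun x => signVal_mul_self (h x))
  rw [hsplit, sum_sum_corrPMF, corrExp_self_eq_sum_sq]
  nth_rewrite 1 [← hparseval]
  simp only [Finset.sum_div, ← Finset.sum_add_distrib]
  exact Finset.sum_congr rfl fun S _ => by ring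

def spectralWeight {d : ℕ} (H : ((Fin d → Bool) → Bool) → ℝ) (S : Finset (Fin d)) : ℝ :=
  ∑ h, H h * cubeFourierCoeff d (fun x => signVal (h x)) S ^ 2

lemma collProbH_eq_sum (d : ℕ) (θ : ℝ) (H : ((Fin d → Bool) → Bool) → ℝ) :
    collProbH d θ H = ∑ S, spectralWeight H S * ((1 + θ ^ #S) / 2) := by
  simp only [collProbH, collProb_eq_sum, spectralWeight, Finset.mul_sum, Finset.sum_mul]
  rw [Finset.sum_comm]
  exact Finset.sum_congr rfl fun S _ => Finset.sum_congr rfl fun h _ => by ring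

lemma spectralWeight_nonneg {d : ℕ} {H : ((Fin d → Bool) → Bool) → ℝ} (hH : ∀ h, 0 ≤ H h)
    (S : Finset (Fin d)) : 0 ≤ spectralWeight H S :=
  Finset.sum_nonneg fun h _ => mul_nonneg (hH h) (sq_nonneg _)

lemma sum_spectralWeight {d : ℕ} {H : ((Fin d → Bool) → Bool) → ℝ} (hH : ∑ h, H h = 1) :
    ∑ S, spectralWeight H S = 1 := by
  unfold spectralWeight
  rw [Finset.sum_comm]
  simp only [← Finset.mul_sum, sum_sq_cubeFourierCoeff fun x => signVal_mul_self _, mul_one, hH]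

lemma half_le_collProbH {d : ℕ} {θ : ℝ} (hθ : 0 ≤ θ) {H : ((Fin d → Bool) → Bool) → ℝ}
    (hH₀ : ∀ h, 0 ≤ H h) (hH₁ : ∑ h, H h = 1) : 1 / 2 ≤ collProbH d θ H := by
  calc 1 / 2 = ∑ S, spectralWeight H S * (1 / 2) := by
        rw [← Finset.sum_mul, sum_spectralWeight hH₁, one_mul]
    _ ≤ collProbH d θ H := by
      rw [collProbH_eq_sum]
      gcongr with S
      · exact spectralWeight_nonneg hH₀ S
      · linarith [pow_nonneg hθ #S]

lemma monotoneOn_pow_mul_one_add_div_one_add_pow (m : ℕ) :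
    MonotoneOn (fun t : ℝ => ((m : ℝ) + 1) * t ^ m * (1 + t) / (1 + t ^ (m + 1)))
      (Set.Icc 0 1) := by
  rintro s ⟨hs₀, -⟩ t ⟨ht₀, ht₁⟩ hst
  have hpow : s ^ m ≤ t ^ m := pow_le_pow_left₀ hs₀ hst m
  have ht₁' : t ^ m ≤ 1 := pow_le_one₀ ht₀ ht₁
  have hm : (0 : ℝ) ≤ m + 1 := by positivity
  dsimp only
  rw [div_le_div_iff₀ (by positivity) (by positivity), pow_succ, pow_succ]
  nlinarith [mul_nonneg hm (mul_nonneg (sub_nonneg.2 hpow) (by linarith : (0 : ℝ) ≤ 1 + t)),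
    mul_nonneg hm
      (mul_nonneg (mul_nonneg (pow_nonneg hs₀ m) (sub_nonneg.2 ht₁')) (sub_nonneg.2 hst))]

lemma two_mul_exp_neg_sub_one_mem_Icc {u : ℝ} (hu : u ∈ Set.Icc 0 (log 2)) :
    2 * exp (-u) - 1 ∈ Set.Icc 0 1 := by
  have hlow : exp (-log 2) ≤ exp (-u) := exp_le_exp.2 (neg_le_neg hu.2)
  have hhigh : exp (-u) ≤ 1 := exp_le_one_iff.2 (neg_nonpos.2 hu.1)
  rw [exp_neg, exp_log two_pos] at hlow
  constructor <;> linarith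

/-- If a single coordinate of a correlated pair agrees with probability `exp (-u)`, then the
parity of `k` coordinates agrees with probability `exp (-parityExponent k u)`. -/
def parityExponent (k : ℕ) (u : ℝ) : ℝ := log 2 - log (1 + (2 * exp (-u) - 1) ^ k)

lemma parityExponent_zero_right (k : ℕ) : parityExponent k 0 = 0 := by
  norm_num [parityExponent]

lemma parityExponent_log_two_div (k : ℕ) {θ : ℝ} (hθ : 0 ≤ θ) :
    parityExponent k (log (2 / (1 + θ))) = -log ((1 + θ ^ k) / 2) := by
  have hexp : 2 * exp (-log (2 / (1 + θ))) - 1 = θ := by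
    rw [exp_neg, exp_log (by positivity)]
    field_simp
    ring
  rw [parityExponent, hexp, log_div (by positivity) two_ne_zero]
  ring

lemma hasDerivAt_parityExponent_succ (m : ℕ) {u : ℝ} (hu : 0 ≤ 2 * exp (-u) - 1) :
    HasDerivAt (parityExponent (m + 1))
      (((m : ℝ) + 1) * (2 * exp (-u) - 1) ^ m * (1 + (2 * exp (-u) - 1))
        / (1 + (2 * exp (-u) - 1) ^ (m + 1))) u := by
  have hinner : HasDerivAt (fun u => 2 * exp (-u) - 1) (-(2 * exp (-u))) u := by
    simpa using ((hasDerivAt_neg u).exp.const_mul 2).sub_const 1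
  have hlog := ((hinner.pow (m + 1)).const_add 1).log
    (add_pos_of_pos_of_nonneg one_pos (pow_nonneg hu _)).ne'
  refine (hlog.const_sub (log 2)).congr_deriv ?_
  simp only [Pi.pow_apply, Nat.add_sub_cancel]
  push_cast
  ring

lemma concaveOn_parityExponent (k : ℕ) : ConcaveOn ℝ (Set.Icc 0 (log 2)) (parityExponent k) := by
  obtain _ | m := k
  · have hzero : parityExponent 0 = fun _ => 0 := by
      funext u
      norm_num [parityExponent]
    exact hzero ▸ concaveOn_const _ (convex_Icc _ _)
  have hderiv (u : ℝ) (hu : u ∈ Set.Icc 0 (log 2)) :=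
    hasDerivAt_parityExponent_succ m (two_mul_exp_neg_sub_one_mem_Icc hu).1
  refine AntitoneOn.concaveOn_of_deriv (convex_Icc _ _)
    (fun u hu => (hderiv u hu).continuousAt.continuousWithinAt)
    (fun u hu => (hderiv u (interior_subset hu)).differentiableAt.differentiableWithinAt) ?_
  intro u hu v hv huv
  have hu' := interior_subset hu
  have hv' := interior_subset hv
  rw [(hderiv u hu').deriv, (hderiv v hv').deriv]
  exact monotoneOn_pow_mul_one_add_div_one_add_pow m (two_mul_exp_neg_sub_one_mem_Icc hv')
    (two_mul_exp_neg_sub_one_mem_Icc hu') (by linarith [exp_le_exp.2 (neg_le_neg huv)])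

lemma ConcaveOn.div_mul_le_of_map_zero {f : ℝ → ℝ} {s : Set ℝ} (hf : ConcaveOn ℝ s f)
    (h₀ : 0 ∈ s) (hf₀ : f 0 = 0) {x y : ℝ} (hx : x ∈ s) (hy : y ∈ s) (hx₀ : 0 < x) (hxy : x ≤ y) :
    x / y * f y ≤ f x := by
  have hslope := hf.antitoneOn_slope_gt h₀ ⟨hx, hx₀⟩ ⟨hy, hx₀.trans_le hxy⟩ hxy
  simp only [slope, hf₀, vsub_eq_sub, sub_zero, smul_eq_mul] at hslope
  calc x / y * f y = x * (y⁻¹ * f y) := by ring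
    _ ≤ x * (x⁻¹ * f x) := mul_le_mul_of_nonneg_left hslope hx₀.le
    _ = f x := by field_simp

lemma log_two_div_one_add_pos {θ : ℝ} (hθ₀ : -1 < θ) (hθ₁ : θ < 1) : 0 < log (2 / (1 + θ)) :=
  log_pos ((one_lt_div (by linarith)).2 (by linarith))

lemma log_two_div_one_add_le {α β : ℝ} (hβ : -1 < β) (hβα : β ≤ α) :
    log (2 / (1 + α)) ≤ log (2 / (1 + β)) :=
  log_le_log (div_pos two_pos (by linarith)) (div_le_div_of_nonneg_left zero_le_two (by linarith)
    (by linarith))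

lemma one_add_pow_div_two_le_rpow (k : ℕ) {α β : ℝ} (hβ : 0 ≤ β) (hβα : β ≤ α) (hα : α < 1) :
    (1 + α ^ k) / 2 ≤ ((1 + β ^ k) / 2) ^ (log (2 / (1 + α)) / log (2 / (1 + β))) := by
  have hx₀ : 0 < log (2 / (1 + α)) := log_two_div_one_add_pos (by linarith) hα
  have hxy := log_two_div_one_add_le (by linarith) hβα
  have hy : log (2 / (1 + β)) ≤ log 2 :=
    log_le_log (div_pos two_pos (by linarith)) (div_le_self zero_le_two (by linarith))
  have hconc := (concaveOn_parityExponent k).div_mul_le_of_map_zero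
    ⟨le_rfl, log_nonneg one_le_two⟩ (parityExponent_zero_right k) ⟨hx₀.le, hxy.trans hy⟩
    ⟨hx₀.le.trans hxy, hy⟩ hx₀ hxy
  have hα₀ : 0 ≤ α := hβ.trans hβα
  rw [parityExponent_log_two_div k hα₀, parityExponent_log_two_div k hβ] at hconc
  rw [← log_le_log_iff (by positivity) (by positivity), log_rpow (by positivity)]
  linarith

lemma collProbH_le_rpow {d : ℕ} {α β : ℝ} (hβ : 0 ≤ β) (hβα : β ≤ α) (hα : α < 1)
    {H : ((Fin d → Bool) → Bool) → ℝ} (hH₀ : ∀ h, 0 ≤ H h) (hH₁ : ∑ h, H h = 1) :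
    collProbH d α H ≤ collProbH d β H ^ (log (2 / (1 + α)) / log (2 / (1 + β))) := by
  set c := log (2 / (1 + α)) / log (2 / (1 + β))
  have hβ₁ : β < 1 := hβα.trans_lt hα
  have hc₀ : 0 ≤ c := div_nonneg (log_two_div_one_add_pos (by linarith) hα).le
    (log_two_div_one_add_pos (by linarith) hβ₁).le
  have hc₁ : c ≤ 1 := div_le_one_of_le₀ (log_two_div_one_add_le (by linarith) hβα)
    (log_two_div_one_add_pos (by linarith) hβ₁).le
  calc collProbH d α H = ∑ S, spectralWeight H S * ((1 + α ^ #S) / 2) := collProbH_eq_sum d α H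
    _ ≤ ∑ S, spectralWeight H S * ((1 + β ^ #S) / 2) ^ c := by
      gcongr with S
      · exact spectralWeight_nonneg hH₀ S
      · exact one_add_pow_div_two_le_rpow #S hβ hβα hα
    _ ≤ (∑ S, spectralWeight H S * ((1 + β ^ #S) / 2)) ^ c := by
      simpa only [smul_eq_mul] using (concaveOn_rpow hc₀ hc₁).le_map_sum
        (fun S _ => spectralWeight_nonneg hH₀ S) (sum_spectralWeight hH₁)
        (fun S _ => Set.mem_Ici.2 (by positivity))
    _ = collProbH d β H ^ c := by rw [collProbH_eq_sum]

theorem boolean_lsh_lower_bound_general (d : ℕ) (α β : ℝ)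
    (hβ : 0 ≤ β) (hβα : β < α) (hα : α < 1)
    (H : ((Fin d → Bool) → Bool) → ℝ) (Hnonneg : ∀ h, 0 ≤ H h) (Hsum : ∑ h, H h = 1)
    (hpβ : collProbH d β H < 1) :
    Real.log (1 / collProbH d α H) / Real.log (1 / collProbH d β H) ≥
      Real.log (2 / (1 + α)) / Real.log (2 / (1 + β)) := by
  have hpα₀ : 0 < collProbH d α H :=
    one_half_pos.trans_le (half_le_collProbH (hβ.trans hβα.le) Hnonneg Hsum)
  have hpβ₀ : 0 < collProbH d β H := one_half_pos.trans_le (half_le_collProbH hβ Hnonneg Hsum)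
  have hkey : log (collProbH d α H) ≤
      log (2 / (1 + α)) / log (2 / (1 + β)) * log (collProbH d β H) := by
    rw [← log_rpow hpβ₀]
    exact log_le_log hpα₀ (collProbH_le_rpow hβ hβα.le hα Hnonneg Hsum)
  rw [one_div, one_div, log_inv, log_inv, neg_div_neg_eq, ge_iff_le,
    le_div_iff_of_neg (log_neg hpβ₀ hpβ)]
  exact hkey

/-- for any probability distribution `H` over Boolean functions on the
`d`-dimensional hypercube, with `0 ≤ β < α < 1` and `p_β < 1`, we have
`log(1/p_α)/log(1/p_β) ≥ log(2/(1+α))/log(2/(1+β))`. -/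
theorem boolean_lsh_lower_bound (d : ℕ) (hd : 0 < d) (α β : ℝ)
    (hβ : 0 ≤ β) (hβα : β < α) (hα : α < 1)
    (H : ((Fin d → Bool) → Bool) → ℝ) (Hnonneg : ∀ h, 0 ≤ H h) (Hsum : ∑ h, H h = 1)
    (hpβ : collProbH d β H < 1) :
    Real.log (1 / collProbH d α H) / Real.log (1 / collProbH d β H) ≥
      Real.log (2 / (1 + α)) / Real.log (2 / (1 + β)) :=
  boolean_lsh_lower_bound_general d α β hβ hβα hα H Hnonneg Hsum hpβ
end
end

section
/- Let d be a positive integer and let 0 ≤ β < α < 1. Let H be a probability distribution over the (finite) set of Boolean functions h : {-1,1}^d → {-1,1}, and for θ ∈ [0,1] let p_θ = Pr_{h∼H, (x,y) θ-correlated}[h(x) = h(y)]. Assume p_β < 1 and that H attains the minimum value, i.e., log(1/p_α)/log(1/p_β) = log(2/(1+α))/log(2/(1+β)). Then every function h assigned nonzero probability by H is a dictator function, i.e., of the form h(x) = x_i or h(x) = -x_i for some coordinate i. -/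
open Finset

noncomputable section

/-!
Expanding in the Fourier basis of the cube, `p_θ = ∑_k w_k (1 + θ^k) / 2`, where `w_k` is the
expected Fourier weight at level `k` of `h ∼ H`; the `w_k` form a probability vector.
Put `c = log (2/(1+α)) / log (2/(1+β)) ∈ (0, 1)`. Level by level `(1 + α^k)/2 ≤ ((1 + β^k)/2)^c`,
strictly for `k ≥ 2`: with `ψ(u) = log (2/(1+e^{-u}))` this says that `ψ(k u) / ψ(u)` decreases
in `u`, i.e. that the elasticity `u ψ'(u) / ψ(u)` decreases. Hence
`p_α ≤ ∑_k w_k ((1 + β^k)/2)^c ≤ p_β^c` by concavity of `t ↦ t^c`, and the optimality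
`p_α = p_β^c` forces equality in both steps. The first kills the levels `k ≥ 2`, the second
(strict concavity) kills level `0`, since there `(1 + β^0)/2 = 1 ≠ p_β`. So every `h` in the
support of `H` has all its Fourier weight on level `1`, and a Boolean function of degree one is a
dictator.
-/

open Real

-- The equality case of `∑ w a ≤ ∑ w b ^ c ≤ (∑ w b) ^ c`, the second step being Jensen's
-- inequality for the strictly concave `t ↦ t ^ c`.
lemma eq_rpow_and_eq_sum_of_sum_mul_eq_rpow {ι : Type*} {t : Finset ι} {w a b : ι → ℝ}
    {c : ℝ} (hc0 : 0 < c) (hc1 : c < 1) (hw : ∀ i ∈ t, 0 ≤ w i) (hw1 : ∑ i ∈ t, w i = 1)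
    (hb : ∀ i ∈ t, 0 ≤ b i) (hab : ∀ i ∈ t, a i ≤ b i ^ c)
    (heq : ∑ i ∈ t, w i * a i = (∑ i ∈ t, w i * b i) ^ c) {i : ι} (hi : i ∈ t)
    (hwi : w i ≠ 0) :
    a i = b i ^ c ∧ b i = ∑ j ∈ t, w j * b j := by
  have hconc := strictConcaveOn_rpow hc0 hc1
  have hjensen : ∑ j ∈ t, w j * b j ^ c ≤ (∑ j ∈ t, w j * b j) ^ c :=
    hconc.concaveOn.le_map_sum hw hw1 hb
  have hsum_le : ∑ j ∈ t, w j * a j ≤ ∑ j ∈ t, w j * b j ^ c :=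
    sum_le_sum fun j hj => mul_le_mul_of_nonneg_left (hab j hj) (hw j hj)
  have hgap : ∑ j ∈ t, w j * (b j ^ c - a j) = 0 := by
    simp only [mul_sub, sum_sub_distrib]; linarith
  have hgap_i := (sum_eq_zero_iff_of_nonneg fun j hj =>
    mul_nonneg (hw j hj) (sub_nonneg.2 (hab j hj))).1 hgap i hi
  refine ⟨by linarith [(mul_eq_zero.1 hgap_i).resolve_left hwi], ?_⟩
  have hconst := (hconc.map_sum_eq_iff_of_nonneg hw hw1 hb).1 (by simp only [smul_eq_mul]; linarith)
  calc b i = ∑ j ∈ t, w j * b i := by rw [← sum_mul, hw1, one_mul]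
    _ = ∑ j ∈ t, w j * b j := sum_congr rfl fun j hj => by
      rcases eq_or_ne (w j) 0 with h | h
      · rw [h, zero_mul, zero_mul]
      · rw [hconst hj h hi hwi]

lemma Finset.sum_eq_sum_singleton_of_card_ne_one {ι M : Type*} [Fintype ι] [DecidableEq ι]
    [AddCommMonoid M] (g : Finset ι → M) (hg : ∀ S : Finset ι, S.card ≠ 1 → g S = 0) :
    ∑ S, g S = ∑ i, g {i} := by
  calc ∑ S, g S = ∑ S ∈ univ.image singleton, g S := by
        refine (sum_subset (subset_univ _) fun S _ hS => hg S fun hcard => hS ?_).symm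
        obtain ⟨i, rfl⟩ := card_eq_one.1 hcard
        exact mem_image_of_mem _ (mem_univ i)
    _ = ∑ i, g {i} := sum_image fun i _ j _ h => singleton_injective h

lemma exists_eq_one_and_eq_zero_of_sum_eq_one {ι : Type*} [Fintype ι] {v : ι → ℝ}
    (hv : ∀ i, v i = 0 ∨ v i = 1) (hsum : ∑ i, v i = 1) :
    ∃ i, v i = 1 ∧ ∀ j, j ≠ i → v j = 0 := by
  classical
  have hcard : (univ.filter fun i => v i = 1).card = 1 := by
    have : ∑ i, v i = ∑ i, if v i = 1 then (1 : ℝ) else 0 :=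
      sum_congr rfl fun i _ => by rcases hv i with h | h <;> simp [h]
    rw [this, sum_boole] at hsum
    exact_mod_cast hsum
  obtain ⟨i, hi⟩ := card_eq_one.1 hcard
  have hmem : ∀ j, v j = 1 ↔ j = i := fun j => by
    rw [← mem_singleton (a := i), ← hi, mem_filter, and_iff_right (mem_univ j)]
  exact ⟨i, (hmem i).2 rfl, fun j hj => (hv j).resolve_right fun hj1 => hj ((hmem j).1 hj1)⟩

lemma eq_rpow_of_log_one_div_div_log_one_div_eq {p q c : ℝ} (hp0 : 0 < p) (hp1 : p < 1)
    (hq : 0 < q) (h : log (1 / q) / log (1 / p) = c) : q = p ^ c := by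
  have hlogp : log (1 / p) ≠ 0 := by
    rw [one_div, log_inv]; exact neg_ne_zero.2 (log_neg hp0 hp1).ne
  rw [div_eq_iff hlogp, one_div, one_div, log_inv, log_inv] at h
  rw [rpow_def_of_pos hp0, ← exp_log hq]
  congr 1
  linear_combination -h

namespace BooleanLSH

lemma signVal_mul_signVal (a b : Bool) : signVal a * signVal b = if a = b then 1 else -1 := by
  cases a <;> cases b <;> norm_num [signVal]

lemma signVal_mul_self (b : Bool) : signVal b * signVal b = 1 := by
  cases b <;> norm_num [signVal]

lemma signVal_injective : Function.Injective signVal := by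
  intro a b; cases a <;> cases b <;> norm_num [signVal]

lemma signVal_true : signVal true = 1 := rfl

lemma signVal_not (b : Bool) : signVal (!b) = -signVal b := by
  cases b <;> norm_num [signVal]

lemma signVal_eq_one_or_eq_neg_one (b : Bool) : signVal b = 1 ∨ signVal b = -1 := by
  cases b <;> norm_num [signVal]

/-- `ψ(u) = log (2 / (1 + e^{-u}))` is `-log` of the collision probability `(1 + θ) / 2` of a
dictator at correlation `θ = e^{-u}`. -/
def psi (u : ℝ) : ℝ := log 2 - log (1 + exp (-u))

lemma psi_pos {u : ℝ} (hu : 0 < u) : 0 < psi u := by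
  have : exp (-u) < 1 := exp_lt_one_iff.2 (neg_lt_zero.2 hu)
  have : log (1 + exp (-u)) < log 2 := log_lt_log (by positivity) (by linarith)
  unfold psi; linarith

lemma psi_le_half (u : ℝ) : psi u ≤ u / 2 := by
  have hcosh : 2 ≤ exp (u / 2) + exp (-(u / 2)) := by
    have := one_le_cosh (u / 2); rw [cosh_eq] at this; linarith
  have hsplit : exp (u / 2) + exp (-(u / 2)) = exp (u / 2) * (1 + exp (-u)) := by
    rw [mul_add, mul_one, ← exp_add]; ring_nf
  have := log_le_log two_pos hcosh
  rw [hsplit, log_mul (exp_pos _).ne' (by positivity), log_exp] at this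
  unfold psi; linarith

lemma hasDerivAt_psi (u : ℝ) : HasDerivAt psi (1 / (exp u + 1)) u := by
  have h := ((((hasDerivAt_neg u).exp).const_add 1).log (by positivity)).const_sub (log 2)
  refine h.congr_deriv ?_
  rw [exp_neg]
  field_simp

/-- The elasticity `u ψ'(u) / ψ(u)` of `ψ`. -/
def psiElasticity (u : ℝ) : ℝ := u / ((exp u + 1) * psi u)

lemma one_add_sub_one_mul_exp_pos {u : ℝ} (hu : 0 < u) : 0 < 1 + (u - 1) * exp u := by
  have h := add_one_lt_exp (neg_ne_zero.2 hu.ne')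
  have h' : (-u + 1) * exp u < 1 := by
    calc (-u + 1) * exp u < exp (-u) * exp u := by gcongr
      _ = 1 := by rw [← exp_add, neg_add_cancel, exp_zero]
  linarith

lemma psiElasticity_strictAntiOn : StrictAntiOn psiElasticity (Set.Ioi 0) := by
  have hD : ∀ u, HasDerivAt (fun u => (exp u + 1) * psi u) (exp u * psi u + 1) u := fun u =>
    (((hasDerivAt_exp u).add_const 1).mul (hasDerivAt_psi u)).congr_deriv (by field_simp)
  have hDpos : ∀ u ∈ Set.Ioi (0 : ℝ), 0 < (exp u + 1) * psi u := fun u hu =>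
    mul_pos (by positivity) (psi_pos hu)
  apply strictAntiOn_of_deriv_neg (convex_Ioi 0)
  · exact continuousOn_id.div (fun u _ => (hD u).continuousAt.continuousWithinAt)
      (fun u hu => (hDpos u hu).ne')
  intro u hu
  rw [interior_Ioi] at hu
  have hG : HasDerivAt psiElasticity _ u := (hasDerivAt_id u).div (hD u) (hDpos u hu).ne'
  rw [hG.deriv]
  refine div_neg_of_neg_of_pos ?_ (pow_pos (hDpos u hu) 2)
  -- the numerator is `ψ(u) g(u) - u` with `g(u) = e^u + 1 - u e^u < 2` and `ψ(u) ≤ u / 2`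
  have hg : exp u + 1 - u * exp u < 2 := by
    have := one_add_sub_one_mul_exp_pos hu; linarith
  have := mul_lt_mul_of_pos_left hg (psi_pos hu)
  have := psi_le_half u
  simp only [id]
  nlinarith

lemma hasDerivAt_log_psi {u : ℝ} (hu : 0 < u) :
    HasDerivAt (fun v => log (psi v)) (psiElasticity u / u) u :=
  ((hasDerivAt_psi u).log (psi_pos hu).ne').congr_deriv (by
    unfold psiElasticity; field_simp)

lemma log_psi_mul_sub_log_psi_strictAntiOn {k : ℝ} (hk : 1 < k) :
    StrictAntiOn (fun v => log (psi (k * v)) - log (psi v)) (Set.Ioi 0) := by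
  have hkv : ∀ v ∈ Set.Ioi (0 : ℝ), 0 < k * v := fun v hv => mul_pos (by linarith) hv
  have hderiv : ∀ v ∈ Set.Ioi (0 : ℝ), HasDerivAt (fun v => log (psi (k * v)) - log (psi v))
      (psiElasticity (k * v) / v - psiElasticity v / v) v := fun v hv =>
    (((hasDerivAt_log_psi (hkv v hv)).comp v ((hasDerivAt_id v).const_mul k)).sub
      (hasDerivAt_log_psi hv)).congr_deriv (by
        have : v ≠ 0 := ne_of_gt hv
        field_simp)
  apply strictAntiOn_of_deriv_neg (convex_Ioi 0)
  · exact HasDerivAt.continuousOn hderiv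
  intro v hv
  rw [interior_Ioi] at hv
  rw [(hderiv v hv).deriv, sub_neg, div_lt_div_iff_of_pos_right hv]
  exact psiElasticity_strictAntiOn hv (hkv v hv) (lt_mul_of_one_lt_left hv hk)

lemma psi_mul_psi_mul_lt {k : ℝ} (hk : 1 < k) {a b : ℝ} (ha : 0 < a) (hab : a < b) :
    psi a * psi (k * b) < psi (k * a) * psi b := by
  have hb : 0 < b := ha.trans hab
  have hka : 0 < k * a := mul_pos (by linarith) ha
  have hkb : 0 < k * b := mul_pos (by linarith) hb
  have h := log_psi_mul_sub_log_psi_strictAntiOn hk ha hb hab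
  simp only at h
  rw [← log_lt_log_iff (mul_pos (psi_pos ha) (psi_pos hkb)) (mul_pos (psi_pos hka) (psi_pos hb)),
    log_mul (psi_pos ha).ne' (psi_pos hkb).ne', log_mul (psi_pos hka).ne' (psi_pos hb).ne']
  linarith

lemma log_two_div_one_add_pos {θ : ℝ} (h0 : 0 ≤ θ) (h1 : θ < 1) : 0 < log (2 / (1 + θ)) :=
  log_pos (by rw [lt_div_iff₀ (by linarith)]; linarith)

lemma log_two_div_one_add_pow_eq_psi {θ : ℝ} (hθ : 0 < θ) (k : ℕ) :
    log (2 / (1 + θ ^ k)) = psi (k * -log θ) := by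
  have : (1 : ℝ) + θ ^ k ≠ 0 := by positivity
  rw [psi, mul_neg, neg_neg, exp_nat_mul, exp_log hθ, log_div two_ne_zero this]

lemma one_add_div_two_rpow {θ : ℝ} (hθ : 0 ≤ θ) (c : ℝ) :
    ((1 + θ) / 2) ^ c = exp (-(c * log (2 / (1 + θ)))) := by
  rw [← mul_neg, ← log_inv, inv_div, rpow_def_of_pos (by positivity), mul_comm]

lemma one_add_div_two_eq_exp {θ : ℝ} (hθ : 0 ≤ θ) :
    (1 + θ) / 2 = exp (-log (2 / (1 + θ))) := by
  simpa using one_add_div_two_rpow hθ 1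

section Pointwise

variable {α β : ℝ} (hβ : 0 ≤ β) (hβα : β < α) (hα : α < 1)
include hβ hβα hα

lemma log_two_div_div_log_two_div_pos : 0 < log (2 / (1 + α)) / log (2 / (1 + β)) :=
  div_pos (log_two_div_one_add_pos (hβ.trans hβα.le) hα)
    (log_two_div_one_add_pos hβ (hβα.trans hα))

lemma log_two_div_div_log_two_div_lt_one : log (2 / (1 + α)) / log (2 / (1 + β)) < 1 := by
  rw [div_lt_one (log_two_div_one_add_pos hβ (hβα.trans hα))]
  exact log_lt_log (div_pos two_pos (by linarith))
    (div_lt_div_of_pos_left two_pos (by linarith) (by linarith))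

lemma log_two_div_mul_log_two_div_pow_lt {k : ℕ} (hk : 2 ≤ k) :
    log (2 / (1 + α)) * log (2 / (1 + β ^ k)) < log (2 / (1 + α ^ k)) * log (2 / (1 + β)) := by
  have hα0 : 0 < α := hβ.trans_lt hβα
  rcases hβ.eq_or_lt with rfl | hβ0
  · rw [zero_pow (by omega)]
    refine mul_lt_mul_of_pos_right ?_ (log_two_div_one_add_pos le_rfl (by norm_num))
    have : α ^ k < α := pow_lt_self_of_lt_one₀ hα0 hα (by omega)
    exact log_lt_log (by positivity) (div_lt_div_of_pos_left two_pos (by positivity) (by linarith))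
  · have h := psi_mul_psi_mul_lt (k := k) (by exact_mod_cast hk) (neg_pos.2 (log_neg hα0 hα))
      (neg_lt_neg (log_lt_log hβ0 hβα))
    have hα1 := log_two_div_one_add_pow_eq_psi hα0 1
    have hβ1 := log_two_div_one_add_pow_eq_psi hβ0 1
    rw [pow_one, Nat.cast_one, one_mul] at hα1 hβ1
    rwa [← hα1, ← hβ1, ← log_two_div_one_add_pow_eq_psi hα0,
      ← log_two_div_one_add_pow_eq_psi hβ0] at h

lemma one_add_pow_div_two_lt_rpow {k : ℕ} (hk : 2 ≤ k) :
    (1 + α ^ k) / 2 < ((1 + β ^ k) / 2) ^ (log (2 / (1 + α)) / log (2 / (1 + β))) := by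
  rw [one_add_div_two_rpow (pow_nonneg hβ k),
    one_add_div_two_eq_exp (pow_nonneg (hβ.trans hβα.le) k),
    exp_lt_exp, neg_lt_neg_iff, div_mul_eq_mul_div,
    div_lt_iff₀ (log_two_div_one_add_pos hβ (hβα.trans hα))]
  exact log_two_div_mul_log_two_div_pow_lt hβ hβα hα hk

lemma one_add_pow_div_two_le_rpow (k : ℕ) :
    (1 + α ^ k) / 2 ≤ ((1 + β ^ k) / 2) ^ (log (2 / (1 + α)) / log (2 / (1 + β))) := by
  rcases lt_or_ge k 2 with hk | hk
  · rw [one_add_div_two_rpow (pow_nonneg hβ k),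
      one_add_div_two_eq_exp (pow_nonneg (hβ.trans hβα.le) k)]
    interval_cases k
    · norm_num
    · have := log_two_div_one_add_pos hβ (hβα.trans hα)
      rw [pow_one, pow_one, div_mul_cancel₀ _ this.ne']
  · exact (one_add_pow_div_two_lt_rpow hβ hβα hα hk).le

end Pointwise

section Fourier

variable {d : ℕ}

def cubeChar (S : Finset (Fin d)) (x : Fin d → Bool) : ℝ := ∏ i ∈ S, signVal (x i)

lemma corrExp_sum_mul_left {ι : Type*} (s : Finset ι) (θ : ℝ) (c : ι → ℝ)
    (φ : ι → (Fin d → Bool) → ℝ) (g : (Fin d → Bool) → ℝ) :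
    corrExp d θ (fun x => ∑ i ∈ s, c i * φ i x) g =
      ∑ i ∈ s, c i * corrExp d θ (φ i) g := by
  simp only [corrExp, mul_sum, sum_mul]
  conv_rhs => rw [sum_comm]
  refine sum_congr rfl fun x _ => ?_
  rw [sum_comm]
  exact sum_congr rfl fun i _ => sum_congr rfl fun y _ => by ring

lemma corrExp_sum_mul_right {ι : Type*} (s : Finset ι) (θ : ℝ) (c : ι → ℝ)
    (f : (Fin d → Bool) → ℝ) (φ : ι → (Fin d → Bool) → ℝ) :
    corrExp d θ f (fun y => ∑ i ∈ s, c i * φ i y) =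
      ∑ i ∈ s, c i * corrExp d θ f (φ i) := by
  simp only [corrExp, mul_sum]
  conv_rhs => rw [sum_comm]
  refine sum_congr rfl fun x _ => ?_
  rw [sum_comm]
  exact sum_congr rfl fun i _ => sum_congr rfl fun y _ => by ring

lemma sum_cubeChar_mul_cubeChar (x y : Fin d → Bool) :
    ∑ S, cubeChar S x * cubeChar S y = if x = y then (2 : ℝ) ^ d else 0 := by
  simp only [cubeChar, ← prod_mul_distrib]
  rw [← powerset_univ, ← prod_one_add]
  split_ifs with hxy
  · simp [hxy, signVal_mul_self, one_add_one_eq_two]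
  · obtain ⟨i, hi⟩ := Function.ne_iff.1 hxy
    exact prod_eq_zero (mem_univ i) (by rw [signVal_mul_signVal, if_neg hi]; norm_num)

lemma cubeFourierCoeff_eq (f : (Fin d → Bool) → ℝ) (S : Finset (Fin d)) :
    cubeFourierCoeff d f S = 1 / 2 ^ d * ∑ x, f x * cubeChar S x := rfl

lemma cubeFourier_inversion (f : (Fin d → Bool) → ℝ) (x : Fin d → Bool) :
    f x = ∑ S, cubeFourierCoeff d f S * cubeChar S x := by
  simp only [cubeFourierCoeff_eq, mul_assoc, ← mul_sum, sum_mul]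
  rw [sum_comm]
  simp only [← mul_sum, sum_cubeChar_mul_cubeChar, mul_ite, mul_zero, sum_ite_eq', mem_univ,
    if_true]
  field_simp

lemma corrPMF_eq_prod (θ : ℝ) (x y : Fin d → Bool) :
    corrPMF d θ x y = ∏ i, (if x i = y i then (1 + θ) / 2 else (1 - θ) / 2) / 2 := by
  rw [corrPMF, prod_div_distrib, prod_const, card_univ, Fintype.card_fin]
  ring

lemma cubeChar_eq_prod_univ (S : Finset (Fin d)) (x : Fin d → Bool) :
    cubeChar S x = ∏ i, if i ∈ S then signVal (x i) else 1 :=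
  (prod_ite_mem_eq S _).symm

lemma corrExp_cubeChar (θ : ℝ) (S T : Finset (Fin d)) :
    corrExp d θ (cubeChar S) (cubeChar T) = if S = T then θ ^ S.card else 0 := by
  -- both the density and the characters factor over the coordinates
  set F : Fin d → Bool → Bool → ℝ := fun i a b =>
    (if a = b then (1 + θ) / 2 else (1 - θ) / 2) / 2 *
      ((if i ∈ S then signVal a else 1) * (if i ∈ T then signVal b else 1))
  have hF : ∀ i, ∑ a, ∑ b, F i a b =
      if (i ∈ S ↔ i ∈ T) then (if i ∈ S then θ else 1) else 0 := by
    intro i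
    by_cases hS : i ∈ S <;> by_cases hT : i ∈ T <;>
      simp [F, hS, hT, signVal] <;> ring
  have hfactor : corrExp d θ (cubeChar S) (cubeChar T) = ∏ i, ∑ a, ∑ b, F i a b := by
    simp only [Fintype.prod_sum, corrExp, corrPMF_eq_prod, cubeChar_eq_prod_univ,
      ← prod_mul_distrib, F]
  rw [hfactor, Finset.prod_congr rfl fun i _ => hF i]
  split_ifs with hST
  · simp [hST]
  · obtain ⟨i, hi⟩ : ∃ i, ¬(i ∈ S ↔ i ∈ T) := by
      by_contra! h; exact hST (Finset.ext h)
    exact prod_eq_zero (mem_univ i) (if_neg hi)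

lemma corrExp_self_eq_sum (θ : ℝ) (f : (Fin d → Bool) → ℝ) :
    corrExp d θ f f = ∑ S, θ ^ S.card * cubeFourierCoeff d f S ^ 2 := by
  have hf : f = fun x => ∑ S, cubeFourierCoeff d f S * cubeChar S x :=
    funext (cubeFourier_inversion f)
  conv_lhs => rw [hf]
  simp only [corrExp_sum_mul_left, corrExp_sum_mul_right, corrExp_cubeChar, mul_ite, mul_zero,
    sum_ite_eq', mem_univ, if_true]
  exact sum_congr rfl fun S _ => by ring

lemma sum_pow_card_mul_sq_eq_sum_cubeFourierWeight (θ : ℝ) (f : (Fin d → Bool) → ℝ) :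
    ∑ S, θ ^ S.card * cubeFourierCoeff d f S ^ 2 =
      ∑ k ∈ range (d + 1), θ ^ k * cubeFourierWeight d f k := by
  rw [← sum_fiberwise_of_maps_to (g := card) (t := range (d + 1))
    fun S _ => mem_range_succ_iff.2 (card_le_univ S |>.trans_eq (Fintype.card_fin d))]
  refine sum_congr rfl fun k _ => ?_
  rw [cubeFourierWeight, mul_sum]
  exact sum_congr rfl fun S hS => by rw [(mem_filter.1 hS).2]

lemma cubeFourierWeight_nonneg (f : (Fin d → Bool) → ℝ) (k : ℕ) :
    0 ≤ cubeFourierWeight d f k :=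
  sum_nonneg fun _ _ => sq_nonneg _

lemma corrPMF_one (x y : Fin d → Bool) : corrPMF d 1 x y = if x = y then 1 / 2 ^ d else 0 := by
  split_ifs with hxy
  · simp [corrPMF, hxy]
  · obtain ⟨i, hi⟩ := Function.ne_iff.1 hxy
    rw [corrPMF, prod_eq_zero (mem_univ i) (by simp [hi]), mul_zero]

variable (h : (Fin d → Bool) → Bool)

lemma sum_sq_cubeFourierCoeff_bool :
    ∑ S, cubeFourierCoeff d (fun x => signVal (h x)) S ^ 2 = 1 := by
  have h1 := corrExp_self_eq_sum 1 fun x => signVal (h x)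
  simp only [one_pow, one_mul] at h1
  rw [← h1, corrExp]
  simp [corrPMF_one, signVal_mul_self]

lemma sum_cubeFourierWeight_bool :
    ∑ k ∈ range (d + 1), cubeFourierWeight d (fun x => signVal (h x)) k = 1 := by
  rw [← sum_sq_cubeFourierCoeff_bool h]
  simpa using (sum_pow_card_mul_sq_eq_sum_cubeFourierWeight 1 fun x => signVal (h x)).symm

lemma collProb_eq_corrExp (θ : ℝ) :
    collProb d θ h = (1 + corrExp d θ (fun x => signVal (h x)) (fun x => signVal (h x))) / 2 := by
  have hmass : ∑ x, ∑ y, corrPMF d θ x y = 1 := by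
    simpa [corrExp, cubeChar] using corrExp_cubeChar θ (∅ : Finset (Fin d)) ∅
  have hind : ∀ a b : Bool,
      (if a = b then (1 : ℝ) else 0) = (1 + signVal a * signVal b) / 2 := by
    intro a b; rw [signVal_mul_signVal]; split_ifs <;> norm_num
  simp only [collProb, corrExp, hind, mul_div, mul_add, mul_one, add_div, sum_add_distrib,
    ← sum_div, hmass]

lemma collProb_eq_sum_cubeFourierWeight (θ : ℝ) :
    collProb d θ h =
      ∑ k ∈ range (d + 1),
        cubeFourierWeight d (fun x => signVal (h x)) k * ((1 + θ ^ k) / 2) := by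
  rw [collProb_eq_corrExp, corrExp_self_eq_sum, sum_pow_card_mul_sq_eq_sum_cubeFourierWeight]
  conv_lhs => rw [← sum_cubeFourierWeight_bool h]
  rw [← sum_add_distrib, sum_div]
  exact sum_congr rfl fun k _ => by ring

end Fourier

section LevelOne

variable {d : ℕ} (h : (Fin d → Bool) → Bool)
  (hvan : ∀ S : Finset (Fin d), S.card ≠ 1 →
    cubeFourierCoeff d (fun x => signVal (h x)) S = 0)
include hvan

lemma signVal_eq_sum_of_cubeFourierCoeff_eq_zero (x : Fin d → Bool) :
    signVal (h x) = ∑ i, cubeFourierCoeff d (fun x => signVal (h x)) {i} * signVal (x i) := by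
  refine (cubeFourier_inversion (fun x => signVal (h x)) x).trans ?_
  rw [Finset.sum_eq_sum_singleton_of_card_ne_one _ fun S hS => by rw [hvan S hS, zero_mul]]
  simp [cubeChar]

lemma sq_cubeFourierCoeff_singleton_eq_zero_or_one (j : Fin d) :
    cubeFourierCoeff d (fun x => signVal (h x)) {j} ^ 2 = 0 ∨
      cubeFourierCoeff d (fun x => signVal (h x)) {j} ^ 2 = 1 := by
  -- flipping coordinate `j` of the all-`true` point changes `signVal ∘ h` by `2 f̂({j})`
  set x₀ : Fin d → Bool := fun _ => true
  set x₁ := Function.update x₀ j false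
  have hflip : ∀ i, signVal (x₁ i) = 1 - 2 * if i = j then 1 else 0 := fun i => by
    rcases eq_or_ne i j with rfl | hij <;> norm_num [x₁, x₀, signVal, *]
  have h₀ := signVal_eq_sum_of_cubeFourierCoeff_eq_zero h hvan x₀
  have h₁ := signVal_eq_sum_of_cubeFourierCoeff_eq_zero h hvan x₁
  simp only [hflip, mul_sub, mul_ite, mul_one, mul_zero, sum_sub_distrib,
    sum_ite_eq', mem_univ, if_true] at h₁
  simp only [x₀, signVal_true, mul_one] at h₀
  have hj : cubeFourierCoeff d (fun x => signVal (h x)) {j} * 2 =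
      signVal (h x₀) - signVal (h x₁) := by linarith
  generalize cubeFourierCoeff d (fun x => signVal (h x)) {j} = c at hj ⊢
  rcases signVal_eq_one_or_eq_neg_one (h x₀) with hu | hu <;>
  rcases signVal_eq_one_or_eq_neg_one (h x₁) with hv | hv <;>
  · rw [hu, hv] at hj
    obtain rfl := eq_div_of_mul_eq two_ne_zero hj
    norm_num

theorem exists_dictator_of_cubeFourierCoeff_eq_zero :
    ∃ i : Fin d, (∀ x, h x = x i) ∨ (∀ x, h x = !(x i)) := by
  have hsum : ∑ i, cubeFourierCoeff d (fun x => signVal (h x)) {i} ^ 2 = 1 := by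
    rw [← sum_sq_cubeFourierCoeff_bool h,
      Finset.sum_eq_sum_singleton_of_card_ne_one _ fun S hS => by rw [hvan S hS, sq, zero_mul]]
  obtain ⟨i, hi, hzero⟩ := exists_eq_one_and_eq_zero_of_sum_eq_one
    (sq_cubeFourierCoeff_singleton_eq_zero_or_one h hvan) hsum
  have hlin : ∀ x,
      signVal (h x) = cubeFourierCoeff d (fun x => signVal (h x)) {i} * signVal (x i) :=
    fun x => by
      rw [signVal_eq_sum_of_cubeFourierCoeff_eq_zero h hvan x, sum_eq_single i
        (fun j _ hj => by rw [pow_eq_zero_iff two_ne_zero |>.1 (hzero j hj), zero_mul])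
        (fun hi => absurd (mem_univ i) hi)]
  refine ⟨i, ?_⟩
  rcases sq_eq_one_iff.1 hi with hc | hc
  · exact Or.inl fun x => signVal_injective (by rw [hlin, hc, one_mul])
  · exact Or.inr fun x => signVal_injective (by rw [hlin, hc, signVal_not, neg_one_mul])

end LevelOne

section Distribution

variable {d : ℕ}

def expectedFourierWeight (H : ((Fin d → Bool) → Bool) → ℝ) (k : ℕ) : ℝ :=
  ∑ h, H h * cubeFourierWeight d (fun x => signVal (h x)) k

variable {H : ((Fin d → Bool) → Bool) → ℝ}

lemma collProbH_eq_sum_expectedFourierWeight (θ : ℝ) :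
    collProbH d θ H = ∑ k ∈ range (d + 1), expectedFourierWeight H k * ((1 + θ ^ k) / 2) := by
  simp only [collProbH, collProb_eq_sum_cubeFourierWeight, expectedFourierWeight, mul_sum,
    sum_mul]
  rw [sum_comm]
  exact sum_congr rfl fun k _ => sum_congr rfl fun h _ => by ring

lemma sum_expectedFourierWeight (hH1 : ∑ h, H h = 1) :
    ∑ k ∈ range (d + 1), expectedFourierWeight H k = 1 := by
  simp only [expectedFourierWeight]
  rw [sum_comm]
  simp [← mul_sum, sum_cubeFourierWeight_bool, hH1]

variable (hH : ∀ h, 0 ≤ H h)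
include hH

lemma expectedFourierWeight_nonneg (k : ℕ) : 0 ≤ expectedFourierWeight H k :=
  sum_nonneg fun h _ => mul_nonneg (hH h) (cubeFourierWeight_nonneg _ k)

lemma cubeFourierCoeff_eq_zero_of_expectedFourierWeight_eq_zero {h : (Fin d → Bool) → Bool}
    (hh : H h ≠ 0) {S : Finset (Fin d)} (hS : expectedFourierWeight H S.card = 0) :
    cubeFourierCoeff d (fun x => signVal (h x)) S = 0 := by
  have hterm := (sum_eq_zero_iff_of_nonneg fun g _ =>
    mul_nonneg (hH g) (cubeFourierWeight_nonneg _ _)).1 hS h (mem_univ h)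
  have hW := (mul_eq_zero.1 hterm).resolve_left hh
  exact pow_eq_zero_iff two_ne_zero |>.1 <|
    (sum_eq_zero_iff_of_nonneg fun _ _ => sq_nonneg _).1 hW S (mem_filter.2 ⟨mem_univ S, rfl⟩)

lemma one_half_le_collProbH (hH1 : ∑ h, H h = 1) {θ : ℝ} (hθ : 0 ≤ θ) :
    1 / 2 ≤ collProbH d θ H := by
  rw [collProbH_eq_sum_expectedFourierWeight]
  calc (1 : ℝ) / 2 = ∑ k ∈ range (d + 1), expectedFourierWeight H k * (1 / 2) := by
        rw [← sum_mul, sum_expectedFourierWeight hH1, one_mul]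
    _ ≤ _ := sum_le_sum fun k _ => mul_le_mul_of_nonneg_left
        (by linarith [pow_nonneg hθ k]) (expectedFourierWeight_nonneg hH k)

end Distribution

end BooleanLSH

open BooleanLSH

theorem boolean_lsh_optimum_is_dictator_general (d : ℕ) (α β : ℝ)
    (hβ : 0 ≤ β) (hβα : β < α) (hα : α < 1)
    (H : ((Fin d → Bool) → Bool) → ℝ) (Hnonneg : ∀ h, 0 ≤ H h) (Hsum : ∑ h, H h = 1)
    (hpβ : collProbH d β H < 1)
    (hopt : Real.log (1 / collProbH d α H) / Real.log (1 / collProbH d β H) =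
      Real.log (2 / (1 + α)) / Real.log (2 / (1 + β))) :
    ∀ h, H h ≠ 0 → ∃ i : Fin d, (∀ x, h x = x i) ∨ (∀ x, h x = !(x i)) := by
  intro h hh
  have hP := one_half_le_collProbH Hnonneg Hsum hβ
  have hQ := one_half_le_collProbH Hnonneg Hsum (hβ.trans hβα.le)
  have hQP := eq_rpow_of_log_one_div_div_log_one_div_eq (by linarith) hpβ (by linarith) hopt
  have hlevel : ∀ k ∈ range (d + 1), expectedFourierWeight H k ≠ 0 → k = 1 := by
    intro k hk hwk
    obtain ⟨hk_eq, hk_mean⟩ := eq_rpow_and_eq_sum_of_sum_mul_eq_rpow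
      (log_two_div_div_log_two_div_pos hβ hβα hα)
      (log_two_div_div_log_two_div_lt_one hβ hβα hα)
      (fun k _ => expectedFourierWeight_nonneg Hnonneg k) (sum_expectedFourierWeight Hsum)
      (fun k _ => by linarith [pow_nonneg hβ k])
      (fun k _ => one_add_pow_div_two_le_rpow hβ hβα hα k)
      (by simpa only [← collProbH_eq_sum_expectedFourierWeight] using hQP) hk hwk
    rw [← collProbH_eq_sum_expectedFourierWeight] at hk_mean
    rcases (by omega : k = 0 ∨ k = 1 ∨ 2 ≤ k) with rfl | rfl | hk2
    · norm_num at hk_mean; linarith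
    · rfl
    · exact absurd hk_eq (one_add_pow_div_two_lt_rpow hβ hβα hα hk2).ne
  refine exists_dictator_of_cubeFourierCoeff_eq_zero h fun S hS => ?_
  refine cubeFourierCoeff_eq_zero_of_expectedFourierWeight_eq_zero Hnonneg hh ?_
  by_contra hw
  exact hS (hlevel _ (mem_range_succ_iff.2 (card_le_univ S |>.trans_eq (Fintype.card_fin d))) hw)

/-- if a probability distribution `H` over Boolean functions attains the
minimum value `log(1/p_α)/log(1/p_β) = log(2/(1+α))/log(2/(1+β))` for `0 ≤ β < α < 1`
with `p_β < 1`, then every function with nonzero probability under `H` is a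
dictator function `h(x) = x_i` or `h(x) = -x_i`. -/
theorem boolean_lsh_optimum_is_dictator (d : ℕ) (hd : 0 < d) (α β : ℝ)
    (hβ : 0 ≤ β) (hβα : β < α) (hα : α < 1)
    (H : ((Fin d → Bool) → Bool) → ℝ) (Hnonneg : ∀ h, 0 ≤ H h) (Hsum : ∑ h, H h = 1)
    (hpβ : collProbH d β H < 1)
    (hopt : Real.log (1 / collProbH d α H) / Real.log (1 / collProbH d β H) =
      Real.log (2 / (1 + α)) / Real.log (2 / (1 + β))) :
    ∀ h, H h ≠ 0 → ∃ i : Fin d, (∀ x, h x = x i) ∨ (∀ x, h x = !(x i)) :=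
  boolean_lsh_optimum_is_dictator_general d α β hβ hβα hα H Hnonneg Hsum hpβ hopt
end
end

section
/- Let d be a positive integer, let 0 ≤ β < α < 1, and let w_0, w_1, …, w_d be nonnegative reals with Σ_{i=0}^{d} w_i = 1 and w_0 < 1. Then log(2/(1 + Σ_{i=0}^{d} α^i w_i)) / log(2/(1 + Σ_{i=0}^{d} β^i w_i)) ≥ log(2/(1+α)) / log(2/(1+β)), with equality if and only if w_1 = 1. -/
/-!
Write `L y = log (2 / (1 + y))`, `S x = ∑ wᵢ xⁱ` and `ρ = L / (-L') = (1 + y) L y`. The claim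
is that `x ↦ L (S x) / L x` is strictly increasing on `[0, 1)` unless `w₁ = 1`, i.e. `S = id`.
Its derivative has the sign of `ρ (S x) - S' x ρ x`. Termwise `i xⁱ⁻¹ ρ x ≤ ρ (xⁱ)`, strictly for
`i ≥ 2` (the difference is decreasing in `x` and vanishes at `x = 1`), and
`∑ wᵢ ρ (xⁱ) ≤ ρ (S x)` by Jensen, `ρ` being strictly concave. Unless all the weight sits on
`i = 1`, one of the two is strict.
-/

open Real Set

lemma Fintype.exists_ne_ne_zero_of_sum_eq {ι M : Type*} [Fintype ι] [AddCommMonoid M]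
    {w : ι → M} {a : M} (hsum : ∑ i, w i = a) {j : ι} (hj : w j ≠ a) : ∃ i ≠ j, w i ≠ 0 := by
  by_contra! h
  exact hj (hsum ▸ (Finset.sum_eq_single j (fun i _ hi => h i hi) (by simp)).symm)

lemma Fintype.eq_zero_of_sum_eq_of_eq {ι M : Type*} [Fintype ι] [DecidableEq ι]
    [AddCommMonoid M] [PartialOrder M] [IsOrderedCancelAddMonoid M]
    {w : ι → M} (hw : ∀ i, 0 ≤ w i) {a : M} (hsum : ∑ i, w i = a) {j : ι} (hj : w j = a)
    {i : ι} (hi : i ≠ j) : w i = 0 := by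
  have hrest : ∑ k ∈ Finset.univ.erase j, w k = 0 := by
    have := Finset.add_sum_erase Finset.univ w (Finset.mem_univ j)
    rw [hsum, hj] at this
    exact left_eq_add.1 this.symm
  exact (Finset.sum_eq_zero_iff_of_nonneg (fun k _ => hw k)).1 hrest i (by simp [hi])

namespace WeightAssignment

noncomputable def logTwoDiv (y : ℝ) : ℝ := log (2 / (1 + y))

noncomputable def rho (y : ℝ) : ℝ := (1 + y) * logTwoDiv y

variable {s t x y : ℝ}

lemma logTwoDiv_eq (hy : -1 < y) : logTwoDiv y = log 2 - log (1 + y) :=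
  log_div two_ne_zero (by linarith)

lemma logTwoDiv_pos (h₀ : -1 < y) (h₁ : y < 1) : 0 < logTwoDiv y :=
  log_pos <| (one_lt_div (by linarith)).2 (by linarith)

lemma one_sub_div_two_le_logTwoDiv (hy : -1 < y) : (1 - y) / 2 ≤ logTwoDiv y := by
  have h := log_le_sub_one_of_pos (x := (1 + y) / 2) (by linarith)
  rw [← neg_le_neg_iff, ← log_inv, inv_div] at h
  unfold logTwoDiv
  linarith

lemma logTwoDiv_sub_logTwoDiv_le (hs : 0 ≤ s) (hst : s ≤ t) :
    logTwoDiv s - logTwoDiv t ≤ t - s := by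
  rw [logTwoDiv_eq (by linarith), logTwoDiv_eq (by linarith), sub_sub_sub_cancel_left,
    ← log_div (by linarith) (by linarith)]
  calc log ((1 + t) / (1 + s)) ≤ (1 + t) / (1 + s) - 1 :=
        log_le_sub_one_of_pos (div_pos (by linarith) (by linarith))
    _ = (t - s) / (1 + s) := by field_simp; ring
    _ ≤ t - s := div_le_self (by linarith) (by linarith)

lemma strictAntiOn_logTwoDiv : StrictAntiOn logTwoDiv (Ioi (-1)) := fun a ha b hb hab => by
  rw [logTwoDiv_eq ha, logTwoDiv_eq hb]
  have := log_lt_log (by linarith [mem_Ioi.1 ha]) (by linarith : 1 + a < 1 + b)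
  linarith

lemma hasDerivAt_logTwoDiv (hy : -1 < y) : HasDerivAt logTwoDiv (-(1 + y)⁻¹) y := by
  have h := (((hasDerivAt_id y).const_add 1).log (by rw [id]; linarith)).const_sub (log 2)
  simp only [id, one_div] at h
  exact h.congr_of_eventuallyEq <|
    Filter.mem_of_superset (Ioi_mem_nhds hy) fun z hz => logTwoDiv_eq hz

lemma rho_one : rho 1 = 0 := by norm_num [rho, logTwoDiv]

lemma hasDerivAt_rho (hy : -1 < y) : HasDerivAt rho (logTwoDiv y - 1) y := by
  have h := ((hasDerivAt_id y).const_add 1).mul (hasDerivAt_logTwoDiv hy)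
  refine h.congr_deriv ?_
  rw [id]
  field_simp [show 1 + y ≠ 0 by linarith]
  ring

lemma strictConcaveOn_rho : StrictConcaveOn ℝ (Ioi (-1)) rho := by
  refine StrictAntiOn.strictConcaveOn_of_deriv (convex_Ioi _)
    (fun y hy => (hasDerivAt_rho hy).continuousAt.continuousWithinAt) ?_
  rw [interior_Ioi]
  intro a ha b hb hab
  rw [(hasDerivAt_rho ha).deriv, (hasDerivAt_rho hb).deriv]
  linarith [strictAntiOn_logTwoDiv ha hb hab]

lemma mul_logTwoDiv_pow_sub_lt {n : ℕ} (hn : 2 ≤ n) (h₀ : 0 < t) (h₁ : t < 1) :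
    t * (logTwoDiv (t ^ n) - logTwoDiv t) < (n - 1) * rho t := by
  obtain ⟨m, rfl⟩ : ∃ m, n = m + 1 := ⟨n - 1, by omega⟩
  have hm : (1 : ℝ) ≤ m := by exact_mod_cast (by omega : 1 ≤ m)
  have hlip : logTwoDiv (t ^ (m + 1)) - logTwoDiv t ≤ t - t ^ (m + 1) :=
    logTwoDiv_sub_logTwoDiv_le (by positivity) (pow_le_of_le_one h₀.le h₁.le (by omega))
  have hbern : t - t ^ (m + 1) ≤ m * (1 - t) * t := by
    have := one_add_mul_sub_le_pow (by linarith : (-1 : ℝ) ≤ t) m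
    rw [pow_succ]
    nlinarith
  have hrho : (1 + t) * ((1 - t) / 2) ≤ rho t :=
    mul_le_mul_of_nonneg_left (one_sub_div_two_le_logTwoDiv (by linarith)) (by linarith)
  push_cast
  rw [add_sub_cancel_right]
  calc t * (logTwoDiv (t ^ (m + 1)) - logTwoDiv t) ≤ m * (1 - t) * t ^ 2 := by nlinarith
    _ < m * ((1 + t) * ((1 - t) / 2)) := by
      have : 0 < m * (1 - t) ^ 2 * (1 + 2 * t) / 2 := by
        have : 0 < 1 - t := by linarith
        positivity
      linarith [show m * ((1 + t) * ((1 - t) / 2)) - m * (1 - t) * t ^ 2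
        = m * (1 - t) ^ 2 * (1 + 2 * t) / 2 by ring]
    _ ≤ m * rho t := by gcongr

lemma mul_pow_mul_rho_lt_rho_pow {n : ℕ} (hn : 2 ≤ n) (h₀ : 0 < x) (h₁ : x < 1) :
    n * x ^ (n - 1) * rho x < rho (x ^ n) := by
  obtain ⟨j, rfl⟩ : ∃ j, n = j + 2 := ⟨n - 2, by omega⟩
  set F : ℝ → ℝ := fun t => rho (t ^ (j + 2)) - (j + 2 : ℕ) * t ^ (j + 1) * rho t
  have hF : ∀ t, 0 < t → HasDerivAt F ((j + 2 : ℕ) * t ^ j *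
      (t * (logTwoDiv (t ^ (j + 2)) - logTwoDiv t) - ((j + 2 : ℕ) - 1) * rho t)) t := by
    intro t ht
    have h₁ := (hasDerivAt_rho (by linarith [pow_pos ht (j + 2)])).comp t (hasDerivAt_pow (j + 2) t)
    have h₂ := ((hasDerivAt_pow (j + 1) t).const_mul ((j + 2 : ℕ) : ℝ)).mul
      (hasDerivAt_rho (by linarith))
    refine (h₁.sub h₂).congr_deriv ?_
    simp only [Nat.add_sub_cancel]
    push_cast
    ring
  have hanti : StrictAntiOn F (Icc x 1) := by
    refine strictAntiOn_of_deriv_neg (convex_Icc x 1)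
      (fun t ht => (hF t (by linarith [ht.1])).continuousAt.continuousWithinAt) fun t ht => ?_
    rw [interior_Icc] at ht
    have ht₀ : 0 < t := by linarith [ht.1]
    rw [(hF t ht₀).deriv]
    exact mul_neg_of_pos_of_neg (by positivity)
      (sub_neg.2 (mul_logTwoDiv_pow_sub_lt (by omega) ht₀ ht.2))
  have := hanti (left_mem_Icc.2 h₁.le) (right_mem_Icc.2 h₁.le) h₁
  simpa [F, rho_one] using this

lemma mul_pow_mul_rho_le_rho_pow (n : ℕ) (h₀ : 0 < x) (h₁ : x < 1) :
    n * x ^ (n - 1) * rho x ≤ rho (x ^ n) := by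
  rcases lt_or_ge n 2 with hn | hn
  · interval_cases n <;> simp [rho_one]
  · exact (mul_pow_mul_rho_lt_rho_pow hn h₀ h₁).le

noncomputable def pgf {d : ℕ} (w : Fin (d + 1) → ℝ) (x : ℝ) : ℝ :=
  ∑ i : Fin (d + 1), x ^ (i : ℕ) * w i

variable {d : ℕ} {w : Fin (d + 1) → ℝ}

lemma hasDerivAt_pgf (w : Fin (d + 1) → ℝ) (x : ℝ) :
    HasDerivAt (pgf w) (∑ i : Fin (d + 1), ((i : ℕ) : ℝ) * x ^ ((i : ℕ) - 1) * w i) x :=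
  HasDerivAt.fun_sum fun i _ => (hasDerivAt_pow (i : ℕ) x).mul_const (w i)

lemma pgf_nonneg (hw : ∀ i, 0 ≤ w i) (hx : 0 ≤ x) : 0 ≤ pgf w x :=
  Finset.sum_nonneg fun i _ => mul_nonneg (pow_nonneg hx _) (hw i)

lemma pgf_lt_one (hw : ∀ i, 0 ≤ w i) (hsum : ∑ i, w i = 1) (hw0 : w 0 < 1)
    (h₀ : 0 ≤ x) (h₁ : x < 1) : pgf w x < 1 := by
  obtain ⟨j, hj0, hj⟩ := Fintype.exists_ne_ne_zero_of_sum_eq hsum hw0.ne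
  rw [← hsum]
  refine Finset.sum_lt_sum (fun i _ => mul_le_of_le_one_left (hw i) (pow_le_one₀ h₀ h₁.le))
    ⟨j, Finset.mem_univ _, mul_lt_of_lt_one_left ((hw j).lt_of_ne' hj) ?_⟩
  exact pow_lt_one₀ h₀ h₁ (Fin.val_ne_zero_iff.2 hj0)

lemma pgf_eq_self (hd : 0 < d) (hw : ∀ i, 0 ≤ w i) (hsum : ∑ i, w i = 1) (hw1 : w 1 = 1)
    (x : ℝ) : pgf w x = x := by
  rw [pgf, Finset.sum_eq_single 1
    (fun i _ hi => by rw [Fintype.eq_zero_of_sum_eq_of_eq hw hsum hw1 hi, mul_zero]) (by simp),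
    hw1, mul_one, Fin.val_one', Nat.mod_eq_of_lt (by omega), pow_one]

lemma deriv_pgf_mul_rho_lt (hd : 0 < d) (hw : ∀ i, 0 ≤ w i) (hsum : ∑ i, w i = 1)
    (hw0 : w 0 < 1) (hw1 : w 1 < 1) (h₀ : 0 < x) (h₁ : x < 1) :
    deriv (pgf w) x * rho x < rho (pgf w x) := by
  rw [(hasDerivAt_pgf w x).deriv, Finset.sum_mul]
  have hmem : ∀ i ∈ Finset.univ, x ^ ((i : Fin (d + 1)) : ℕ) ∈ Ioi (-1) :=
    fun i _ => mem_Ioi.2 (by linarith [pow_pos h₀ (i : ℕ)])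
  have hterm : ∀ i : Fin (d + 1),
      (i : ℕ) * x ^ ((i : ℕ) - 1) * w i * rho x = w i * ((i : ℕ) * x ^ ((i : ℕ) - 1) * rho x) :=
    fun i => by ring
  have hle : ∀ i : Fin (d + 1),
      (i : ℕ) * x ^ ((i : ℕ) - 1) * w i * rho x ≤ w i * rho (x ^ (i : ℕ)) := fun i => by
    rw [hterm]
    exact mul_le_mul_of_nonneg_left (mul_pow_mul_rho_le_rho_pow _ h₀ h₁) (hw i)
  have hjensen : ∑ i, w i * rho (x ^ (i : ℕ)) ≤ rho (pgf w x) := by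
    simpa only [smul_eq_mul, pgf, mul_comm] using
      strictConcaveOn_rho.concaveOn.le_map_sum (fun i _ => hw i) hsum hmem
  by_cases hhigh : ∃ i : Fin (d + 1), 2 ≤ (i : ℕ) ∧ w i ≠ 0
  · obtain ⟨i, hi, hwi⟩ := hhigh
    refine (Finset.sum_lt_sum (fun i _ => hle i) ⟨i, Finset.mem_univ _, ?_⟩).trans_le hjensen
    rw [hterm]
    exact mul_lt_mul_of_pos_left (mul_pow_mul_rho_lt_rho_pow hi h₀ h₁) ((hw i).lt_of_ne' hwi)
  · -- all the weight sits on `0` and `1`, both with positive weight, so Jensen is strict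
    push Not at hhigh
    obtain ⟨j, hj0, hj⟩ := Fintype.exists_ne_ne_zero_of_sum_eq hsum hw0.ne
    obtain ⟨k, hk1, hk⟩ := Fintype.exists_ne_ne_zero_of_sum_eq hsum hw1.ne
    have hjk : (j : ℕ) ≠ k := by
      have : (k : ℕ) ≠ 1 := fun h =>
        hk1 (Fin.ext (by rw [h, Fin.val_one', Nat.mod_eq_of_lt (by omega)]))
      have := Fin.val_ne_zero_iff.2 hj0
      have := (hhigh j).mt hj
      have := (hhigh k).mt hk
      omega
    have hstrict := (strictConcaveOn_rho.lt_map_sum_iff_of_nonneg (fun i _ => hw i) hsum hmem).2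
      ⟨j, Finset.mem_univ _, k, Finset.mem_univ _, hj, hk,
        (pow_right_injective₀ h₀ h₁.ne).ne hjk⟩
    simp only [smul_eq_mul, mul_comm (w _) (x ^ _)] at hstrict
    exact (Finset.sum_le_sum fun i _ => hle i).trans_lt hstrict

lemma strictMonoOn_logTwoDiv_pgf_div (hd : 0 < d) (hw : ∀ i, 0 ≤ w i) (hsum : ∑ i, w i = 1)
    (hw0 : w 0 < 1) (hw1 : w 1 < 1) :
    StrictMonoOn (fun x => logTwoDiv (pgf w x) / logTwoDiv x) (Ico 0 1) := by
  have hD : ∀ x ∈ Ico (0 : ℝ) 1, HasDerivAt (fun x => logTwoDiv (pgf w x) / logTwoDiv x)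
      ((rho (pgf w x) - deriv (pgf w) x * rho x) /
        ((1 + pgf w x) * (1 + x) * logTwoDiv x ^ 2)) x := by
    rintro x ⟨h₀, h₁⟩
    have hS := pgf_nonneg hw h₀
    have hL := logTwoDiv_pos (by linarith) h₁
    have hS' := (hasDerivAt_pgf w x).differentiableAt.hasDerivAt
    refine (((hasDerivAt_logTwoDiv (by linarith)).comp x hS').div
      (hasDerivAt_logTwoDiv (by linarith)) hL.ne').congr_deriv ?_
    rw [Function.comp_apply]
    unfold rho
    field_simp
    ring
  refine strictMonoOn_of_deriv_pos (convex_Ico 0 1)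
    (fun x hx => (hD x hx).continuousAt.continuousWithinAt) fun x hx => ?_
  rw [interior_Ico] at hx
  rw [(hD x (Ioo_subset_Ico_self hx)).deriv]
  have hS := pgf_nonneg hw hx.1.le
  have hL := logTwoDiv_pos (by linarith [hx.1]) hx.2
  exact div_pos (sub_pos.2 (deriv_pgf_mul_rho_lt hd hw hsum hw0 hw1 hx.1 hx.2))
    (mul_pos (mul_pos (by linarith) (by linarith [hx.1])) (pow_pos hL 2))

end WeightAssignment

/-- for `0 ≤ β < α < 1` and nonnegative weights `w_0, …, w_d` summing to 1
with `w_0 < 1`,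
`log(2/(1 + ∑ α^i w_i)) / log(2/(1 + ∑ β^i w_i)) ≥ log(2/(1+α)) / log(2/(1+β))`,
with equality if and only if `w_1 = 1`. -/
theorem weight_assignment_lower_bound (d : ℕ) (hd : 0 < d) (α β : ℝ)
    (hβ : 0 ≤ β) (hβα : β < α) (hα : α < 1)
    (w : Fin (d + 1) → ℝ) (hw : ∀ i, 0 ≤ w i) (hsum : ∑ i, w i = 1) (hw0 : w 0 < 1) :
    Real.log (2 / (1 + ∑ i : Fin (d + 1), α ^ (i : ℕ) * w i)) /
        Real.log (2 / (1 + ∑ i : Fin (d + 1), β ^ (i : ℕ) * w i)) ≥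
      Real.log (2 / (1 + α)) / Real.log (2 / (1 + β)) ∧
    (Real.log (2 / (1 + ∑ i : Fin (d + 1), α ^ (i : ℕ) * w i)) /
        Real.log (2 / (1 + ∑ i : Fin (d + 1), β ^ (i : ℕ) * w i)) =
      Real.log (2 / (1 + α)) / Real.log (2 / (1 + β)) ↔ w 1 = 1) := by
  open WeightAssignment in
  change logTwoDiv (pgf w α) / logTwoDiv (pgf w β) ≥ logTwoDiv α / logTwoDiv β ∧
    (logTwoDiv (pgf w α) / logTwoDiv (pgf w β) = logTwoDiv α / logTwoDiv β ↔ w 1 = 1)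
  have hw1 : w 1 ≤ 1 := hsum ▸ Finset.single_le_sum (fun i _ => hw i) (Finset.mem_univ 1)
  rcases hw1.lt_or_eq with hw1 | hw1
  · have hmono := strictMonoOn_logTwoDiv_pgf_div hd hw hsum hw0 hw1
      ⟨hβ, hβα.trans hα⟩ ⟨hβ.trans hβα.le, hα⟩ hβα
    have hSβ := logTwoDiv_pos (by linarith [pgf_nonneg hw hβ])
      (pgf_lt_one hw hsum hw0 hβ (hβα.trans hα))
    have hLα := logTwoDiv_pos (by linarith) hα
    have hLβ := logTwoDiv_pos (by linarith) (hβα.trans hα)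
    have hlt : logTwoDiv α / logTwoDiv β < logTwoDiv (pgf w α) / logTwoDiv (pgf w β) := by
      rw [div_lt_div_iff₀ hLβ hSβ, mul_comm, ← div_lt_div_iff₀ hLβ hLα]
      exact hmono
    exact ⟨hlt.le, iff_of_false hlt.ne' hw1.ne⟩
  · rw [pgf_eq_self hd hw hsum hw1, pgf_eq_self hd hw hsum hw1]
    exact ⟨le_rfl, iff_of_true rfl hw1⟩
end

section
/- Let d be a positive integer, let 0 < β < α < 1, and let w_0, w_1, …, w_d be nonnegative reals with Σ_{i=0}^{d} w_i = 1 and 0 < w_0 < 1. Define s(x) = Σ_{i=0}^{d} w_i x^i. Then ((1 + s(β))/(1 - β)) · log((1 + s(β))/2) > ((1 + s(α))/(1 - α)) · log((1 + s(α))/2). -/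
/-!
Write `g x = (1 + s x) / (1 - x) * log ((1 + s x) / 2)`, `u = (1 + s x) / 2` and
`P = s' x * (1 - x)`. Then `g' x = ((P + 2 u) log u + P) / (1 - x) ^ 2`. Nonnegative weights give
`P ≥ 0`, and convexity of `s` together with `s 1 = 1` gives `P ≤ 1 - s x = 2 (1 - u)`; with
`log u < u - 1` this makes the numerator negative, so `g` is strictly decreasing on `(0, 1)`.
-/

open Real Finset Set

section PowerSum

variable {ι : Type*} [Fintype ι] {w : ι → ℝ} (e : ι → ℕ) {x : ℝ}

lemma hasDerivAt_sum_mul_pow (w : ι → ℝ) (x : ℝ) :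
    HasDerivAt (fun y => ∑ i, w i * y ^ e i) (∑ i, w i * (e i * x ^ (e i - 1))) x :=
  HasDerivAt.fun_sum fun i _ => (hasDerivAt_pow (e i) x).const_mul (w i)

lemma sum_mul_pow_nonneg (hw : ∀ i, 0 ≤ w i) (hx : 0 ≤ x) : 0 ≤ ∑ i, w i * x ^ e i :=
  sum_nonneg fun i _ => mul_nonneg (hw i) (pow_nonneg hx _)

lemma sum_mul_natCast_mul_pow_pred_nonneg (hw : ∀ i, 0 ≤ w i) (hx : 0 ≤ x) :
    0 ≤ ∑ i, w i * (e i * x ^ (e i - 1)) :=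
  sum_nonneg fun i _ => mul_nonneg (hw i) (by positivity)

lemma sum_mul_pow_lt_sum (hw : ∀ i, 0 ≤ w i) (hpos : ∃ i, e i ≠ 0 ∧ 0 < w i)
    (hx0 : 0 ≤ x) (hx1 : x < 1) : ∑ i, w i * x ^ e i < ∑ i, w i := by
  obtain ⟨j, hej, hwj⟩ := hpos
  refine sum_lt_sum (fun i _ => mul_le_of_le_one_right (hw i) (pow_le_one₀ hx0 hx1.le))
    ⟨j, mem_univ j, mul_lt_of_lt_one_right hwj (pow_lt_one₀ hx0 hx1 hej)⟩

/-- Convexity of `y ↦ y ^ n`: its tangent line at `x` lies below `1 ^ n` at `y = 1`. -/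
lemma natCast_mul_pow_pred_mul_one_sub_le (n : ℕ) (hx0 : 0 ≤ x) (hx1 : x ≤ 1) :
    n * x ^ (n - 1) * (1 - x) ≤ 1 - x ^ n := by
  induction n with
  | zero => simp
  | succ n ih =>
    rcases n with _ | n
    · simp
    · have hpow : x ^ (n + 1) ≤ 1 := pow_le_one₀ hx0 hx1
      simp only [Nat.add_sub_cancel, Nat.cast_add, Nat.cast_one] at ih ⊢
      calc (n + 1 + 1 : ℝ) * x ^ (n + 1) * (1 - x)
          = x * ((n + 1) * x ^ n * (1 - x)) + x ^ (n + 1) * (1 - x) := by ring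
        _ ≤ x * (1 - x ^ (n + 1)) + 1 * (1 - x) := by gcongr
        _ = 1 - x ^ (n + 1 + 1) := by ring

lemma sum_mul_natCast_mul_pow_pred_mul_one_sub_le (hw : ∀ i, 0 ≤ w i) (hx0 : 0 ≤ x)
    (hx1 : x ≤ 1) :
    (∑ i, w i * (e i * x ^ (e i - 1))) * (1 - x) ≤ ∑ i, w i - ∑ i, w i * x ^ e i := by
  rw [sum_mul, ← sum_sub_distrib]
  refine sum_le_sum fun i _ => ?_
  convert mul_le_mul_of_nonneg_left (natCast_mul_pow_pred_mul_one_sub_le (e i) hx0 hx1) (hw i)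
    using 1 <;> ring

end PowerSum

lemma add_mul_log_add_neg {u P : ℝ} (hu0 : 0 < u) (hu1 : u < 1) (hP0 : 0 ≤ P)
    (hP : P ≤ 2 * (1 - u)) : (P + 2 * u) * log u + P < 0 := by
  have hlog : log u < u - 1 := log_lt_sub_one_of_pos hu0 hu1.ne
  rcases le_or_gt 0 (1 + log u) with hL | hL
  · nlinarith [mul_le_mul_of_nonneg_right hP hL]
  · nlinarith [mul_nonpos_of_nonneg_of_nonpos hP0 hL.le]

lemma hasDerivAt_div_one_sub_mul_log {s : ℝ → ℝ} {s' x : ℝ} (hs : HasDerivAt s s' x)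
    (hx : x < 1) (hsx : 0 < 1 + s x) :
    HasDerivAt (fun y => (1 + s y) / (1 - y) * log ((1 + s y) / 2))
      (((s' * (1 - x) + 2 * ((1 + s x) / 2)) * log ((1 + s x) / 2) + s' * (1 - x)) /
        (1 - x) ^ 2) x := by
  have h1x : 1 - x ≠ 0 := by linarith
  have hA : HasDerivAt (fun y => (1 + s y) / (1 - y))
      ((s' * (1 - x) - (1 + s x) * -1) / (1 - x) ^ 2) x :=
    (hs.const_add 1).div ((hasDerivAt_id' x).const_sub 1) h1x
  have hB : HasDerivAt (fun y => log ((1 + s y) / 2)) (s' / 2 / ((1 + s x) / 2)) x :=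
    ((hs.const_add 1).div_const 2).log (by positivity)
  refine (hA.mul hB).congr_deriv ?_
  field_simp
  ring

theorem strictAntiOn_div_one_sub_mul_log {s s' : ℝ → ℝ}
    (hs : ∀ x ∈ Ioo (0 : ℝ) 1, HasDerivAt s (s' x) x)
    (hs0 : ∀ x ∈ Ioo (0 : ℝ) 1, 0 ≤ s x) (hs1 : ∀ x ∈ Ioo (0 : ℝ) 1, s x < 1)
    (hs'0 : ∀ x ∈ Ioo (0 : ℝ) 1, 0 ≤ s' x)
    (htangent : ∀ x ∈ Ioo (0 : ℝ) 1, s' x * (1 - x) ≤ 1 - s x) :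
    StrictAntiOn (fun x => (1 + s x) / (1 - x) * log ((1 + s x) / 2)) (Ioo 0 1) := by
  have hg (x) (hx : x ∈ Ioo (0 : ℝ) 1) :=
    hasDerivAt_div_one_sub_mul_log (hs x hx) hx.2 (by linarith [hs0 x hx])
  refine strictAntiOn_of_deriv_neg (convex_Ioo 0 1)
    (fun x hx => (hg x hx).continuousAt.continuousWithinAt) fun x hx => ?_
  rw [interior_Ioo] at hx
  rw [(hg x hx).deriv]
  have h1x : 0 < 1 - x := by linarith [hx.2]
  refine div_neg_of_neg_of_pos (add_mul_log_add_neg ?_ ?_ ?_ ?_) (by positivity)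
  · linarith [hs0 x hx]
  · linarith [hs1 x hx]
  · exact mul_nonneg (hs'0 x hx) h1x.le
  · linarith [htangent x hx]

theorem g_beta_gt_g_alpha_general (d : ℕ) (α β : ℝ)
    (hβ : 0 < β) (hβα : β < α) (hα : α < 1)
    (w : Fin (d + 1) → ℝ) (hw : ∀ i, 0 ≤ w i) (hsum : ∑ i, w i = 1)
    (hw0lt : w 0 < 1) :
    ((1 + ∑ i, w i * β ^ (i : ℕ)) / (1 - β)) *
        Real.log ((1 + ∑ i, w i * β ^ (i : ℕ)) / 2) >
      ((1 + ∑ i, w i * α ^ (i : ℕ)) / (1 - α)) *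
        Real.log ((1 + ∑ i, w i * α ^ (i : ℕ)) / 2) := by
  have hpos : ∃ i : Fin (d + 1), (i : ℕ) ≠ 0 ∧ 0 < w i := by
    by_contra! h
    have : ∑ i, w i = w 0 :=
      Fintype.sum_eq_single 0 fun i hi => le_antisymm (h i (Fin.val_ne_zero_iff.mpr hi)) (hw i)
    linarith
  refine strictAntiOn_div_one_sub_mul_log (fun x _ => hasDerivAt_sum_mul_pow Fin.val w x)
    (fun x hx => sum_mul_pow_nonneg _ hw hx.1.le)
    (fun x hx => by simpa only [hsum] using sum_mul_pow_lt_sum _ hw hpos hx.1.le hx.2)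
    (fun x hx => sum_mul_natCast_mul_pow_pred_nonneg _ hw hx.1.le)
    (fun x hx => by
      simpa only [hsum] using sum_mul_natCast_mul_pow_pred_mul_one_sub_le _ hw hx.1.le hx.2.le)
    ⟨hβ, hβα.trans hα⟩ ⟨hβ.trans hβα, hα⟩ hβα

/-- for `0 < β < α < 1` and nonnegative weights summing to 1 with
`0 < w_0 < 1`, letting `s(x) = ∑_{i=0}^d w_i x^i`, we have
`((1 + s(β))/(1 - β)) log((1 + s(β))/2) > ((1 + s(α))/(1 - α)) log((1 + s(α))/2)`. -/
theorem g_beta_gt_g_alpha (d : ℕ) (hd : 0 < d) (α β : ℝ)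
    (hβ : 0 < β) (hβα : β < α) (hα : α < 1)
    (w : Fin (d + 1) → ℝ) (hw : ∀ i, 0 ≤ w i) (hsum : ∑ i, w i = 1)
    (hw0pos : 0 < w 0) (hw0lt : w 0 < 1) :
    ((1 + ∑ i, w i * β ^ (i : ℕ)) / (1 - β)) *
        Real.log ((1 + ∑ i, w i * β ^ (i : ℕ)) / 2) >
      ((1 + ∑ i, w i * α ^ (i : ℕ)) / (1 - α)) *
        Real.log ((1 + ∑ i, w i * α ^ (i : ℕ)) / 2) :=
  g_beta_gt_g_alpha_general d α β hβ hβα hα w hw hsum hw0lt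
end

section
/- Let 0 < β < α < 1 and γ ≥ 1. Let (w_1,κ_1), …, (w_n,κ_n) be finitely many pairs of reals with each w_j ≥ 0, Σ_{j=1}^{n} w_j = 1, and each κ_j ≥ 1, and define s(x) = Σ_{j=1}^{n} w_j x^{κ_j} for x > 0. If s(β) = β^γ, then s(α) ≤ α^γ. -/
/-!
Write `α = β ^ t` with `t = log_β α ∈ [0, 1]`. Then `α ^ κ = (β ^ κ) ^ t` for every exponent, so
`s(α) = ∑ w_j (β ^ κ_j) ^ t ≤ (∑ w_j β ^ κ_j) ^ t = (β ^ γ) ^ t = α ^ γ`, the inequality being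
Jensen's for the concave function `x ↦ x ^ t`.
-/

open Finset

namespace Real

theorem arith_mean_rpow_le_rpow_arith_mean {ι : Type*} (s : Finset ι) (w z : ι → ℝ)
    (hw : ∀ i ∈ s, 0 ≤ w i) (hw' : ∑ i ∈ s, w i = 1) (hz : ∀ i ∈ s, 0 ≤ z i) {p : ℝ}
    (hp₀ : 0 ≤ p) (hp₁ : p ≤ 1) :
    ∑ i ∈ s, w i * z i ^ p ≤ (∑ i ∈ s, w i * z i) ^ p := by
  simpa using (concaveOn_rpow hp₀ hp₁).le_map_sum hw hw' hz

theorem rpow_rpow_comm {x : ℝ} (hx : 0 ≤ x) (y z : ℝ) : (x ^ y) ^ z = (x ^ z) ^ y := by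
  rw [← rpow_mul hx, ← rpow_mul hx, mul_comm]

theorem exists_rpow_eq_of_base_lt_one {b x : ℝ} (hb₀ : 0 < b) (hb₁ : b < 1) (hbx : b ≤ x)
    (hx : x ≤ 1) : ∃ t : ℝ, 0 ≤ t ∧ t ≤ 1 ∧ b ^ t = x := by
  have hx₀ : 0 < x := hb₀.trans_le hbx
  refine ⟨logb b x, ?_, ?_, rpow_logb hb₀ hb₁.ne hx₀⟩
  · rwa [le_logb_iff_rpow_le_of_base_lt_one hb₀ hb₁ hx₀, rpow_zero]
  · rwa [logb_le_iff_le_rpow_of_base_lt_one hb₀ hb₁ hx₀, rpow_one]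

theorem sum_mul_rpow_rpow_le {ι : Type*} (s : Finset ι) (w κ : ι → ℝ)
    (hw : ∀ i ∈ s, 0 ≤ w i) (hw' : ∑ i ∈ s, w i = 1) {x t : ℝ} (hx : 0 ≤ x) (ht₀ : 0 ≤ t)
    (ht₁ : t ≤ 1) :
    ∑ i ∈ s, w i * (x ^ t) ^ κ i ≤ (∑ i ∈ s, w i * x ^ κ i) ^ t := by
  simp only [rpow_rpow_comm hx t]
  exact arith_mean_rpow_le_rpow_arith_mean s w _ hw hw' (fun i _ ↦ rpow_nonneg hx _) ht₀ ht₁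

end Real

theorem convex_combination_power_bound_general (α β γ : ℝ)
    (hβ : 0 < β) (hβα : β < α) (hα : α < 1)
    (n : ℕ) (w κ : Fin n → ℝ) (hw : ∀ j, 0 ≤ w j) (hsum : ∑ j, w j = 1)
    (hβeq : ∑ j, w j * β ^ (κ j) = β ^ γ) :
    ∑ j, w j * α ^ (κ j) ≤ α ^ γ := by
  obtain ⟨t, ht₀, ht₁, rfl⟩ :=
    Real.exists_rpow_eq_of_base_lt_one hβ (hβα.trans hα) hβα.le hα.le
  calc ∑ j, w j * (β ^ t) ^ κ j ≤ (∑ j, w j * β ^ κ j) ^ t :=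
        Real.sum_mul_rpow_rpow_le _ w κ (fun j _ ↦ hw j) hsum hβ.le ht₀ ht₁
    _ = (β ^ t) ^ γ := by rw [hβeq, Real.rpow_rpow_comm hβ.le]

/-- let `0 < β < α < 1`, `γ ≥ 1`, and let `s(x) = ∑_j w_j x^{κ_j}` be a
convex combination of power functions with exponents `κ_j ≥ 1`. If `s(β) = β^γ` then
`s(α) ≤ α^γ`. -/
theorem convex_combination_power_bound (α β γ : ℝ)
    (hβ : 0 < β) (hβα : β < α) (hα : α < 1) (hγ : 1 ≤ γ)
    (n : ℕ) (w κ : Fin n → ℝ) (hw : ∀ j, 0 ≤ w j) (hsum : ∑ j, w j = 1)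
    (hκ : ∀ j, 1 ≤ κ j)
    (hβeq : ∑ j, w j * β ^ (κ j) = β ^ γ) :
    ∑ j, w j * α ^ (κ j) ≤ α ^ γ :=
  convex_combination_power_bound_general α β γ hβ hβα hα n w κ hw hsum hβeq
end

section
/- Let γ_0, γ, γ_1 be reals with γ_0 < γ < γ_1. Then the function φ(x) = (x^{γ_0} - x^{γ}) / (x^{γ} - x^{γ_1}) is strictly decreasing on the interval (0,1). -/
/-!
With `u = x ^ (γ - γ₁)`, which decreases from `∞` to `1` on `(0, 1)`, and
`e = (γ₁ - γ₀) / (γ₁ - γ) > 1`, one has `φ x + 1 = (u ^ e - 1) / (u - 1)`, the slope of the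
secant of the strictly convex function `u ↦ u ^ e` through `1` and `u`; that slope increases
with `u`.
-/

open Set

theorem Real.strictMonoOn_rpow_secant_one {e : ℝ} (he : 1 < e) :
    StrictMonoOn (fun u : ℝ => (u ^ e - 1) / (u - 1)) (Ioi 1) := by
  intro u hu v hv huv
  have h := (strictConvexOn_rpow he).secant_strict_mono (a := 1) (mem_Ici.mpr zero_le_one)
    (mem_Ici.mpr (zero_le_one.trans hu.le)) (mem_Ici.mpr (zero_le_one.trans hv.le))
    hu.ne' hv.ne' huv
  simpa only [Real.one_rpow] using h

theorem Real.rpow_sub_rpow_div_rpow_sub_rpow {x : ℝ} (hx₀ : 0 < x) (hx₁ : x ≠ 1) {γ₀ γ γ₁ : ℝ}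
    (hγ : γ ≠ γ₁) :
    (x ^ γ₀ - x ^ γ) / (x ^ γ - x ^ γ₁) =
      ((x ^ (γ - γ₁)) ^ ((γ₁ - γ₀) / (γ₁ - γ)) - 1) / (x ^ (γ - γ₁) - 1) - 1 := by
  have hexp : (γ - γ₁) * ((γ₁ - γ₀) / (γ₁ - γ)) = γ₀ - γ₁ := by
    field_simp [sub_ne_zero.mpr hγ.symm]
    ring
  have hden : x ^ γ - x ^ γ₁ ≠ 0 :=
    sub_ne_zero.mpr fun h => hγ ((Real.rpow_right_inj hx₀ hx₁).mp h)
  rw [← Real.rpow_mul hx₀.le, hexp, Real.rpow_sub hx₀, Real.rpow_sub hx₀]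
  have hx₁γ₁ : x ^ γ₁ ≠ 0 := (Real.rpow_pos_of_pos hx₀ γ₁).ne'
  field_simp
  ring

/-- for reals `γ₀ < γ < γ₁`, the function
`φ(x) = (x^{γ₀} - x^γ) / (x^γ - x^{γ₁})` is strictly decreasing on `(0, 1)`. -/
theorem phi_strict_anti (γ₀ γ γ₁ : ℝ) (h₀ : γ₀ < γ) (h₁ : γ < γ₁) :
    StrictAntiOn (fun x : ℝ => (x ^ γ₀ - x ^ γ) / (x ^ γ - x ^ γ₁)) (Set.Ioo 0 1) := by
  have he : 1 < (γ₁ - γ₀) / (γ₁ - γ) := (one_lt_div (sub_pos.mpr h₁)).mpr (by linarith)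
  have hu : StrictAntiOn (fun x : ℝ => x ^ (γ - γ₁)) (Ioo 0 1) :=
    (Real.strictAntiOn_rpow_Ioi_of_exponent_neg (sub_neg.mpr h₁)).mono Ioo_subset_Ioi_self
  have hmaps : MapsTo (fun x : ℝ => x ^ (γ - γ₁)) (Ioo 0 1) (Ioi 1) := fun x hx =>
    Real.one_lt_rpow_of_pos_of_lt_one_of_neg hx.1 hx.2 (sub_neg.mpr h₁)
  have hsecant := (Real.strictMonoOn_rpow_secant_one he).comp_strictAntiOn hu hmaps
  exact StrictAntiOn.congr (fun x hx y hy hxy => sub_lt_sub_right (hsecant hx hy hxy) 1)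
    fun x hx => (Real.rpow_sub_rpow_div_rpow_sub_rpow hx.1 hx.2.ne h₁.ne).symm
end

section
/- Let 0 < β < α < 1 and define ρ(γ) = log((1 + α^γ)/2) / log((1 + β^γ)/2) for γ ≥ 1. Then ρ'(γ) > 0 for all γ ≥ 1; in particular ρ is strictly increasing on [1,∞). -/
/-!
Write `f_c(t) = log ((1 + c ^ t) / 2)`, so that `ρ = f_α / f_β`. The elasticity `t f_c'(t) / f_c(t)`
equals `E(c ^ t)` with `E(x) = x log x / ((1 + x) log ((1 + x) / 2))`, hence
`ρ'(t) = t⁻¹ (E(α ^ t) - E(β ^ t)) ρ(t)`, and since `β ^ t < α ^ t` it suffices that `E` is strictly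
increasing on `(0, 1)`. The numerator of `E'` is `log ((1 + x) / 2) (1 + x + log x) - x log x`. It is
clearly positive when `1 + x + log x ≤ 0`; otherwise combine `log ((1 + x) / 2) ≥ (x - 1) / (1 + x)`
with `-log x > (1 - x²) / (1 + x²)`, which is `log t < 2 (t - 1) / (t + 1)` at `t = x²`.
-/

open Real Set

lemma two_mul_one_sub_div_one_add_lt_neg_log {t : ℝ} (ht0 : 0 < t) (ht1 : t < 1) :
    2 * (1 - t) / (1 + t) < -log t :=
  calc 2 * (1 - t) / (1 + t) = 2 * ((1 - t) / t) / ((1 - t) / t + 2) := by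
        have : (1 - t) / t + 2 = (1 + t) / t := by field_simp; ring
        rw [this]; field_simp
    _ < log (1 + (1 - t) / t) := lt_log_one_add_of_pos (div_pos (by linarith) ht0)
    _ = -log t := by rw [show 1 + (1 - t) / t = t⁻¹ by field_simp; ring, log_inv]

lemma log_one_add_div_two_neg {x : ℝ} (hx0 : -1 < x) (hx1 : x < 1) : log ((1 + x) / 2) < 0 :=
  log_neg (by linarith) (by linarith)

lemma log_one_add_rpow_div_two_neg {c t : ℝ} (hc0 : 0 < c) (hc1 : c < 1) (ht : 0 < t) :
    log ((1 + c ^ t) / 2) < 0 :=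
  log_one_add_div_two_neg (by linarith [rpow_pos_of_pos hc0 t]) (rpow_lt_one hc0.le hc1 ht)

lemma log_one_add_div_two_mul_sub_pos {x : ℝ} (hx0 : 0 < x) (hx1 : x < 1) :
    0 < log ((1 + x) / 2) * (1 + x + log x) - x * log x := by
  have hL := log_one_add_div_two_neg (by linarith) hx1
  have hlog : log x < 0 := log_neg hx0 hx1
  rcases le_or_gt (1 + x + log x) 0 with hA | hA
  · nlinarith [mul_nonneg_of_nonpos_of_nonpos hL.le hA]
  have hL_ge : (x - 1) / (1 + x) ≤ log ((1 + x) / 2) := by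
    convert one_sub_inv_le_log_of_pos (x := (1 + x) / 2) (by linarith) using 1
    field_simp; ring
  have hlog_sq : 1 - x ^ 2 < -log x * (1 + x ^ 2) := by
    have := two_mul_one_sub_div_one_add_lt_neg_log (t := x ^ 2) (by positivity) (by nlinarith)
    rw [log_pow, div_lt_iff₀ (by positivity)] at this
    push_cast at this
    linarith
  calc 0 < ((x - 1) * (1 + x + log x) - (1 + x) * x * log x) / (1 + x) :=
        div_pos (by nlinarith) (by linarith)
    _ = (x - 1) / (1 + x) * (1 + x + log x) - x * log x := by field_simp
    _ ≤ log ((1 + x) / 2) * (1 + x + log x) - x * log x := by gcongr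

noncomputable def elasticity (x : ℝ) : ℝ := x * log x / ((1 + x) * log ((1 + x) / 2))

lemma hasDerivAt_elasticity {x : ℝ} (hx0 : 0 < x) (hx1 : x < 1) :
    HasDerivAt elasticity ((log ((1 + x) / 2) * (1 + x + log x) - x * log x) /
      ((1 + x) * log ((1 + x) / 2)) ^ 2) x := by
  have hL := log_one_add_div_two_neg (by linarith) hx1
  have hnum : HasDerivAt (fun y => y * log y) (log x + 1) x := by
    simpa [hx0.ne'] using (hasDerivAt_id x).fun_mul (hasDerivAt_log hx0.ne')
  have hden : HasDerivAt (fun y => (1 + y) * log ((1 + y) / 2)) (log ((1 + x) / 2) + 1) x := by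
    have hin : HasDerivAt (fun y : ℝ => (1 + y) / 2) (1 / 2) x :=
      ((hasDerivAt_id x).const_add 1).div_const 2
    refine (((hasDerivAt_id' x).const_add 1).fun_mul (hin.log (by positivity))).congr_deriv ?_
    field_simp
  exact (hnum.fun_div hden (mul_neg_of_pos_of_neg (by linarith) hL).ne).congr_deriv (by ring)

lemma strictMonoOn_elasticity : StrictMonoOn elasticity (Ioo 0 1) := by
  refine strictMonoOn_of_deriv_pos (convex_Ioo 0 1)
    (fun x hx => (hasDerivAt_elasticity hx.1 hx.2).continuousAt.continuousWithinAt) ?_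
  intro x hx
  rw [interior_Ioo] at hx
  obtain ⟨hx0, hx1⟩ := hx
  rw [(hasDerivAt_elasticity hx0 hx1).deriv]
  exact div_pos (log_one_add_div_two_mul_sub_pos hx0 hx1) (pow_two_pos_of_ne_zero
    (mul_neg_of_pos_of_neg (by linarith) (log_one_add_div_two_neg (by linarith) hx1)).ne)

lemma HasDerivAt.div_of_eq_mul_self {f g : ℝ → ℝ} {a b t : ℝ} (hf : HasDerivAt f (a * f t) t)
    (hg : HasDerivAt g (b * g t) t) (hg0 : g t ≠ 0) :
    HasDerivAt (fun s => f s / g s) ((a - b) * (f t / g t)) t :=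
  (hf.fun_div hg hg0).congr_deriv (by field_simp)

lemma hasDerivAt_log_one_add_rpow_div_two {c t : ℝ} (hc0 : 0 < c) (hc1 : c < 1) (ht : 0 < t) :
    HasDerivAt (fun s => log ((1 + c ^ s) / 2))
      (t⁻¹ * elasticity (c ^ t) * log ((1 + c ^ t) / 2)) t := by
  refine ((((hasStrictDerivAt_const_rpow hc0 t).hasDerivAt.const_add 1).div_const 2).log
    (by positivity)).congr_deriv ?_
  rw [elasticity, log_rpow hc0]
  field_simp [(log_one_add_rpow_div_two_neg hc0 hc1 ht).ne]

noncomputable def rho (α β t : ℝ) : ℝ := log ((1 + α ^ t) / 2) / log ((1 + β ^ t) / 2)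

lemma rho_pos {α β t : ℝ} (hα0 : 0 < α) (hα1 : α < 1) (hβ0 : 0 < β) (hβ1 : β < 1) (ht : 0 < t) :
    0 < rho α β t :=
  div_pos_of_neg_of_neg (log_one_add_rpow_div_two_neg hα0 hα1 ht)
    (log_one_add_rpow_div_two_neg hβ0 hβ1 ht)

lemma hasDerivAt_rho {α β t : ℝ} (hα0 : 0 < α) (hα1 : α < 1) (hβ0 : 0 < β) (hβ1 : β < 1)
    (ht : 0 < t) :
    HasDerivAt (rho α β) ((t⁻¹ * elasticity (α ^ t) - t⁻¹ * elasticity (β ^ t)) * rho α β t) t :=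
  (hasDerivAt_log_one_add_rpow_div_two hα0 hα1 ht).div_of_eq_mul_self
    (hasDerivAt_log_one_add_rpow_div_two hβ0 hβ1 ht)
    (log_one_add_rpow_div_two_neg hβ0 hβ1 ht).ne

lemma deriv_rho_pos {α β t : ℝ} (hβ0 : 0 < β) (hβα : β < α) (hα1 : α < 1) (ht : 0 < t) :
    0 < deriv (rho α β) t := by
  have hα0 : 0 < α := hβ0.trans hβα
  rw [(hasDerivAt_rho hα0 hα1 hβ0 (hβα.trans hα1) ht).deriv, ← mul_sub]
  refine mul_pos (mul_pos (inv_pos.2 ht) (sub_pos.2 ?_)) (rho_pos hα0 hα1 hβ0 (hβα.trans hα1) ht)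
  exact strictMonoOn_elasticity ⟨rpow_pos_of_pos hβ0 t, rpow_lt_one hβ0.le (hβα.trans hα1) ht⟩
    ⟨rpow_pos_of_pos hα0 t, rpow_lt_one hα0.le hα1 ht⟩ (rpow_lt_rpow hβ0.le hβα ht)

/-- for `0 < β < α < 1` and
`ρ(γ) = log((1 + α^γ)/2) / log((1 + β^γ)/2)`, the derivative `ρ'(γ)` is positive for
all `γ ≥ 1`; in particular `ρ` is strictly increasing on `[1, ∞)`. -/
theorem rho_deriv_pos (α β : ℝ) (hβ : 0 < β) (hβα : β < α) (hα : α < 1) :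
    (∀ γ : ℝ, 1 ≤ γ →
      0 < deriv (fun t : ℝ => Real.log ((1 + α ^ t) / 2) / Real.log ((1 + β ^ t) / 2)) γ) ∧
    StrictMonoOn (fun t : ℝ => Real.log ((1 + α ^ t) / 2) / Real.log ((1 + β ^ t) / 2))
      (Set.Ici 1) := by
  show (∀ γ : ℝ, 1 ≤ γ → 0 < deriv (rho α β) γ) ∧ StrictMonoOn (rho α β) (Ici 1)
  have hα0 : 0 < α := hβ.trans hβα
  refine ⟨fun γ hγ => deriv_rho_pos hβ hβα hα (by linarith),
    strictMonoOn_of_deriv_pos (convex_Ici 1) (fun γ hγ => ?_) (fun γ hγ => ?_)⟩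
  · exact (hasDerivAt_rho hα0 hα hβ (hβα.trans hα)
      (zero_lt_one.trans_le hγ)).continuousAt.continuousWithinAt
  · rw [interior_Ici] at hγ
    exact deriv_rho_pos hβ hβα hα (zero_lt_one.trans hγ)
end

section
/- Let γ ≥ 1. Then the function g(x) = ((1 + x^γ)/(x^γ · log x)) · log((1 + x^γ)/2) is strictly decreasing on the interval (0,1). -/
/-!
Since `log (x ^ γ) = γ log x`, the function is `x ↦ γ h(x ^ γ)` with
`h t = (1 + t) log((1 + t)/2) / (t log t)`, so it suffices that `h` is strictly decreasing
on `(0, 1)`. The numerator of `h'` is negative by `log t < t - 1` and the concavity bound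
`log t / 2 ≤ log ((1 + t)/2)`.
-/

open Real Set

lemma half_log_le_log_one_add_div_two {t : ℝ} (ht : 0 < t) : log t / 2 ≤ log ((1 + t) / 2) := by
  have h := strictConcaveOn_log_Ioi.concaveOn.2 (mem_Ioi.2 one_pos) (mem_Ioi.2 ht)
    (by norm_num : (0 : ℝ) ≤ 1 / 2) (by norm_num : (0 : ℝ) ≤ 1 / 2) (by norm_num)
  rw [smul_eq_mul, smul_eq_mul, smul_eq_mul, smul_eq_mul, log_one,
    show (1 : ℝ) / 2 * 1 + 1 / 2 * t = (1 + t) / 2 by ring] at h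
  linarith

lemma hasDerivAt_one_add_mul_log_half {t : ℝ} (ht : -1 < t) :
    HasDerivAt (fun s => (1 + s) * log ((1 + s) / 2)) (log ((1 + t) / 2) + 1) t := by
  have h := ((hasDerivAt_mul_log (by linarith : (1 + t) / 2 ≠ 0)).comp t
    (((hasDerivAt_id t).const_add 1).div_const 2)).const_mul 2
  refine (h.congr_deriv (by ring)).congr_of_eventuallyEq (.of_forall fun s => ?_)
  simp only [Function.comp, id]
  ring

lemma log_one_add_div_two_add_one_mul_mul_log_lt {t : ℝ} (h0 : 0 < t) (h1 : t < 1) :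
    (log ((1 + t) / 2) + 1) * (t * log t) < (1 + t) * log ((1 + t) / 2) * (log t + 1) := by
  have hmean_neg : log ((1 + t) / 2) < 0 := log_neg (by linarith) (by linarith)
  have hlog_lt : log t < t - 1 := log_lt_sub_one_of_pos h0 h1.ne
  have hconcave := half_log_le_log_one_add_div_two h0
  -- the difference of the two sides is `(-log a) (t - 1 - log t) + t (2 log a - log t)`,
  -- where `a = (1 + t)/2`
  linarith [mul_pos (neg_pos.2 hmean_neg) (sub_pos.2 hlog_lt),
    mul_nonneg h0.le (show 0 ≤ 2 * log ((1 + t) / 2) - log t by linarith)]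

lemma strictAntiOn_one_add_mul_log_half_div_mul_log :
    StrictAntiOn (fun t => (1 + t) * log ((1 + t) / 2) / (t * log t)) (Ioo 0 1) := by
  have hderiv : ∀ t ∈ Ioo (0 : ℝ) 1, HasDerivAt (fun t => (1 + t) * log ((1 + t) / 2) / (t * log t))
      (((log ((1 + t) / 2) + 1) * (t * log t) - (1 + t) * log ((1 + t) / 2) * (log t + 1))
        / (t * log t) ^ 2) t := fun t ht =>
    (hasDerivAt_one_add_mul_log_half (by linarith [ht.1])).div (hasDerivAt_mul_log ht.1.ne')
      (mul_neg_of_pos_of_neg ht.1 (log_neg ht.1 ht.2)).ne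
  refine strictAntiOn_of_deriv_neg (convex_Ioo 0 1)
    (fun t ht => (hderiv t ht).continuousAt.continuousWithinAt) fun t ht => ?_
  rw [interior_Ioo] at ht
  rw [(hderiv t ht).deriv]
  exact div_neg_of_neg_of_pos
    (sub_neg.2 (log_one_add_div_two_add_one_mul_mul_log_lt ht.1 ht.2))
    (sq_pos_of_neg (mul_neg_of_pos_of_neg ht.1 (log_neg ht.1 ht.2)))

/-- for `γ ≥ 1`, the function
`g(x) = ((1 + x^γ)/(x^γ log x)) log((1 + x^γ)/2)` is strictly decreasing on `(0, 1)`. -/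
theorem g_log_strict_anti (γ : ℝ) (hγ : 1 ≤ γ) :
    StrictAntiOn (fun x : ℝ =>
        ((1 + x ^ γ) / (x ^ γ * Real.log x)) * Real.log ((1 + x ^ γ) / 2))
      (Set.Ioo 0 1) := by
  have hγ0 : 0 < γ := by linarith
  have hmaps : MapsTo (· ^ γ) (Ioo (0 : ℝ) 1) (Ioo 0 1) := fun x hx =>
    ⟨rpow_pos_of_pos hx.1 γ, rpow_lt_one hx.1.le hx.2 hγ0⟩
  have hcomp := strictAntiOn_one_add_mul_log_half_div_mul_log.comp_strictMonoOn
    (fun x hx y _ hxy => rpow_lt_rpow hx.1.le hxy hγ0) hmaps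
  refine StrictAntiOn.congr (f₁ := fun x => γ * ((1 + x ^ γ) * log ((1 + x ^ γ) / 2) /
      (x ^ γ * log (x ^ γ)))) (fun x hx y hy hxy => mul_lt_mul_of_pos_left (hcomp hx hy hxy) hγ0)
    fun x hx => ?_
  have hpow_ne : x ^ γ ≠ 0 := (rpow_pos_of_pos hx.1 γ).ne'
  have hlog_ne : log x ≠ 0 := (log_neg hx.1 hx.2).ne
  simp only [log_rpow hx.1]
  field_simp
end

section
/- For every x ∈ (0,1) and every γ ≥ 1, -(1 + x^γ + γ·log x)·log((1 + x^γ)/2) + γ·x^γ·log x < 0. -/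
/-! With `t = x ^ γ ∈ (0, 1)` we have `γ log x = log t`, so `γ` disappears and it remains to show
`t log t < (1 + t + log t) m` for `m = log ((1 + t) / 2)`. The difference is
`(1 + t) m - (t - m) log t`; since `t - m > 0` and `log t ≤ 2 m` (AM–GM), it is at least
`2 m (m - (t - 1) / 2)`, a product of two negative factors by `m < 0` and `log y < y - 1`. -/

open Real

lemma log_le_two_mul_log_add_one_div_two {t : ℝ} (ht : 0 < t) :
    log t ≤ 2 * log ((1 + t) / 2) := by
  have hsq : t ≤ ((1 + t) / 2) ^ 2 := by nlinarith [sq_nonneg (1 - t)]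
  calc log t ≤ log (((1 + t) / 2) ^ 2) := log_le_log ht hsq
    _ = 2 * log ((1 + t) / 2) := by rw [log_pow]; norm_num

lemma log_add_one_div_two_lt {t : ℝ} (ht : -1 < t) (ht1 : t ≠ 1) :
    log ((1 + t) / 2) < (t - 1) / 2 := by
  have := log_lt_sub_one_of_pos (x := (1 + t) / 2) (by linarith)
    (fun h => ht1 (by linarith))
  linarith

lemma mul_log_lt_add_log_mul_log_add_one_div_two {t : ℝ} (ht0 : 0 < t) (ht1 : t < 1) :
    t * log t < (1 + t + log t) * log ((1 + t) / 2) := by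
  set m := log ((1 + t) / 2)
  have hm_neg : m < 0 := log_neg (by linarith) (by linarith)
  have hm_lt : m < (t - 1) / 2 := log_add_one_div_two_lt (by linarith) ht1.ne
  have hlog_le : log t ≤ 2 * m := log_le_two_mul_log_add_one_div_two ht0
  have hprod : 0 < 2 * m * (m - (t - 1) / 2) := mul_pos_of_neg_of_neg (by linarith) (by linarith)
  have hcross : (t - m) * log t ≤ (t - m) * (2 * m) :=
    mul_le_mul_of_nonneg_left hlog_le (by linarith)
  linarith

/-- for every `x ∈ (0,1)` and every `γ ≥ 1`,
`-(1 + x^γ + γ log x) log((1 + x^γ)/2) + γ x^γ log x < 0`. -/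
theorem key_inequality (x γ : ℝ) (hx : x ∈ Set.Ioo (0 : ℝ) 1) (hγ : 1 ≤ γ) :
    -(1 + x ^ γ + γ * Real.log x) * Real.log ((1 + x ^ γ) / 2) +
      γ * x ^ γ * Real.log x < 0 := by
  obtain ⟨hx0, hx1⟩ := hx
  have key := mul_log_lt_add_log_mul_log_add_one_div_two (rpow_pos_of_pos hx0 γ)
    (rpow_lt_one hx0.le hx1 (by linarith))
  rw [log_rpow hx0] at key
  linarith
end

section
/- Let 0 ≤ β < α < 1 and γ ≥ 1. Then log(2/(1 + α^γ)) / log(2/(1 + β^γ)) ≥ log(2/(1+α)) / log(2/(1+β)), with equality if and only if γ = 1. -/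
/-!
Write `x = exp (-u)` and `G u = log (2 / (1 + exp (-u)))`; then `x ^ γ` corresponds to `γ * u`,
and for `β > 0` the claim becomes `G a * G (γ b) < G (γ a) * G b` for `0 < a < b`. This holds
for every positive `G` whose elasticity `u G'(u) / G(u)` is strictly decreasing, because then
`log G (γ u) - log G u` is strictly decreasing. Here `G' u = 1 / (exp u + 1)`, so the elasticity
is `u / M u` with `M u = (exp u + 1) G u`; since `M 0 = 0` and `M' = exp u * G u + 1` is strictly
increasing on `[0, ∞)`, `M` is strictly convex there and its secant slope `M u / u` increases.
For `β = 0` the claim reduces to `α ^ γ < α`.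
-/

open Real Set

theorem mul_comp_const_mul_lt_of_strictAntiOn_elasticity {φ φ' : ℝ → ℝ}
    (hφ : ∀ u, 0 < u → HasDerivAt φ (φ' u) u) (hφ_pos : ∀ u, 0 < u → 0 < φ u)
    (hanti : StrictAntiOn (fun u => u * φ' u / φ u) (Ioi 0))
    {γ a b : ℝ} (hγ : 1 < γ) (ha : 0 < a) (hab : a < b) :
    φ a * φ (γ * b) < φ (γ * a) * φ b := by
  have hγ0 : 0 < γ := one_pos.trans hγ
  set Φ : ℝ → ℝ := fun u => log (φ (γ * u)) - log (φ u)
  have hΦ : ∀ u, 0 < u → HasDerivAt Φ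
      ((γ * u * φ' (γ * u) / φ (γ * u) - u * φ' u / φ u) / u) u := by
    intro u hu
    have hγu : HasDerivAt (fun u => φ (γ * u)) (φ' (γ * u) * γ) u := by
      simpa [Function.comp_def] using (hφ _ (by positivity)).comp u ((hasDerivAt_id u).const_mul γ)
    refine (hγu.log (hφ_pos _ (by positivity)).ne').sub ((hφ u hu).log (hφ_pos u hu).ne')
      |>.congr_deriv ?_
    field_simp
  have hΦ_anti : StrictAntiOn Φ (Ioi 0) := by
    refine strictAntiOn_of_deriv_neg (convex_Ioi 0)
      (fun u hu => (hΦ u hu).continuousAt.continuousWithinAt) fun u hu => ?_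
    rw [interior_Ioi, mem_Ioi] at hu
    rw [(hΦ u hu).deriv]
    refine div_neg_of_neg_of_pos (sub_neg.mpr ?_) hu
    exact hanti hu (mem_Ioi.mpr (by positivity)) (lt_mul_left hu hγ)
  have hb := ha.trans hab
  have hΦab := hΦ_anti ha hb hab
  rw [← log_lt_log_iff (mul_pos (hφ_pos a ha) (hφ_pos _ (by positivity)))
    (mul_pos (hφ_pos _ (by positivity)) (hφ_pos b hb)),
    log_mul (hφ_pos a ha).ne' (hφ_pos _ (by positivity)).ne',
    log_mul (hφ_pos _ (by positivity)).ne' (hφ_pos b hb).ne']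
  simp only [Φ] at hΦab
  linarith

noncomputable def logTwoSigmoid (u : ℝ) : ℝ := log (2 / (1 + exp (-u)))

theorem logTwoSigmoid_eq_log_sub_log (u : ℝ) : logTwoSigmoid u = log 2 - log (1 + exp (-u)) :=
  log_div two_ne_zero (by positivity)

theorem hasDerivAt_logTwoSigmoid (u : ℝ) :
    HasDerivAt logTwoSigmoid (exp u + 1)⁻¹ u := by
  rw [funext logTwoSigmoid_eq_log_sub_log]
  refine (((hasDerivAt_neg u).exp.const_add 1).log (by positivity)).const_sub (log 2)
    |>.congr_deriv ?_
  rw [exp_neg]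
  field_simp

theorem logTwoSigmoid_zero : logTwoSigmoid 0 = 0 := by
  norm_num [logTwoSigmoid]

theorem logTwoSigmoid_pos {u : ℝ} (hu : 0 < u) : 0 < logTwoSigmoid u := by
  refine log_pos ((one_lt_div (by positivity)).mpr ?_)
  linarith [exp_lt_one_iff.mpr (neg_neg_of_pos hu)]

theorem monotone_logTwoSigmoid : Monotone logTwoSigmoid := by
  intro a b hab
  unfold logTwoSigmoid
  gcongr

theorem logTwoSigmoid_neg_log {x : ℝ} (hx : 0 < x) :
    logTwoSigmoid (-log x) = log (2 / (1 + x)) := by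
  rw [logTwoSigmoid, neg_neg, exp_log hx]

theorem logTwoSigmoid_mul_neg_log {x : ℝ} (hx : 0 < x) (γ : ℝ) :
    logTwoSigmoid (γ * -log x) = log (2 / (1 + x ^ γ)) := by
  rw [logTwoSigmoid, rpow_def_of_pos hx]
  ring_nf

theorem strictConvexOn_exp_add_one_mul_logTwoSigmoid :
    StrictConvexOn ℝ (Ici 0) (fun u => (exp u + 1) * logTwoSigmoid u) := by
  have hderiv : ∀ u, HasDerivAt (fun u => (exp u + 1) * logTwoSigmoid u)
      (exp u * logTwoSigmoid u + 1) u := fun u =>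
    ((hasDerivAt_exp u).add_const 1).mul (hasDerivAt_logTwoSigmoid u) |>.congr_deriv
      (by field_simp)
  refine StrictMonoOn.strictConvexOn_of_deriv (convex_Ici 0)
    (fun u _ => (hderiv u).continuousAt.continuousWithinAt) ?_
  rw [interior_Ici]
  intro a ha b hb hab
  simp only [(hderiv _).deriv]
  calc exp a * logTwoSigmoid a + 1 ≤ exp a * logTwoSigmoid b + 1 := by
        gcongr; exact monotone_logTwoSigmoid hab.le
    _ < exp b * logTwoSigmoid b + 1 := by
        gcongr; exacts [logTwoSigmoid_pos (ha.trans hab)]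

theorem strictAntiOn_elasticity_logTwoSigmoid :
    StrictAntiOn (fun u => u * (exp u + 1)⁻¹ / logTwoSigmoid u) (Ioi 0) := by
  intro a ha b hb hab
  have hslope := strictConvexOn_exp_add_one_mul_logTwoSigmoid.secant_strict_mono
    (a := 0) self_mem_Ici (mem_Ici_of_Ioi ha) (mem_Ici_of_Ioi hb) ha.ne' hb.ne' hab
  simp only [logTwoSigmoid_zero, mul_zero, sub_zero] at hslope
  have hGa := logTwoSigmoid_pos ha
  have hratio : ∀ u, u * (exp u + 1)⁻¹ / logTwoSigmoid u = ((exp u + 1) * logTwoSigmoid u / u)⁻¹ :=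
    fun u => by rw [inv_div, div_mul_eq_div_div, div_eq_mul_inv u]
  simp only [hratio]
  exact inv_strictAnti₀ (div_pos (mul_pos (by positivity) hGa) ha) hslope

theorem log_two_div_one_add_pos_s16 {x : ℝ} (hx₀ : -1 < x) (hx₁ : x < 1) : 0 < log (2 / (1 + x)) :=
  log_pos ((one_lt_div (by linarith)).mpr (by linarith))

theorem log_two_div_one_add_div_lt_rpow {α β γ : ℝ} (hβ : 0 ≤ β) (hβα : β < α) (hα : α < 1)
    (hγ : 1 < γ) :
    log (2 / (1 + α)) / log (2 / (1 + β)) < log (2 / (1 + α ^ γ)) / log (2 / (1 + β ^ γ)) := by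
  have hα₀ : 0 < α := hβ.trans_lt hβα
  have hγ₀ : 0 < γ := one_pos.trans hγ
  rcases hβ.eq_or_lt with rfl | hβ₀
  · have hαγ : α ^ γ < α := rpow_lt_self_of_lt_one hα₀ hα hγ
    rw [zero_rpow hγ₀.ne']
    refine div_lt_div_of_pos_right ?_ (log_two_div_one_add_pos_s16 (by norm_num) (by norm_num))
    gcongr
  · have hβ₁ := hβα.trans hα
    rw [div_lt_div_iff₀ (log_two_div_one_add_pos_s16 (by linarith) hβ₁)
      (log_two_div_one_add_pos_s16 (by linarith [rpow_pos_of_pos hβ₀ γ]) (rpow_lt_one hβ hβ₁ hγ₀))]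
    have key := mul_comp_const_mul_lt_of_strictAntiOn_elasticity
      (fun u _ => hasDerivAt_logTwoSigmoid u) (fun _ hu => logTwoSigmoid_pos hu)
      strictAntiOn_elasticity_logTwoSigmoid hγ (neg_pos.mpr (log_neg hα₀ hα))
      (neg_lt_neg (log_lt_log hβ₀ hβα))
    rwa [logTwoSigmoid_neg_log hα₀, logTwoSigmoid_neg_log hβ₀, logTwoSigmoid_mul_neg_log hα₀,
      logTwoSigmoid_mul_neg_log hβ₀] at key

/-- for `0 ≤ β < α < 1` and `γ ≥ 1`,
`log(2/(1 + α^γ)) / log(2/(1 + β^γ)) ≥ log(2/(1+α)) / log(2/(1+β))`, with equality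
if and only if `γ = 1`. -/
theorem rho_gamma_ge (α β γ : ℝ) (hβ : 0 ≤ β) (hβα : β < α) (hα : α < 1) (hγ : 1 ≤ γ) :
    Real.log (2 / (1 + α ^ γ)) / Real.log (2 / (1 + β ^ γ)) ≥
      Real.log (2 / (1 + α)) / Real.log (2 / (1 + β)) ∧
    (Real.log (2 / (1 + α ^ γ)) / Real.log (2 / (1 + β ^ γ)) =
      Real.log (2 / (1 + α)) / Real.log (2 / (1 + β)) ↔ γ = 1) := by
  rcases hγ.eq_or_lt with rfl | hγ₁
  · simp
  · have hlt := log_two_div_one_add_div_lt_rpow hβ hβα hα hγ₁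
    exact ⟨hlt.le, by simp [hlt.ne', hγ₁.ne']⟩
end
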